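/- arXiv:2303.15635 — 7 statements merged into one kernel-verified Lean document; each statement's English description precedes it below -/
import Mathlib

section
/- Let H be a graph whose vertex set is partitioned into sets U and W such that every edge of H either has both endpoints in U or has one endpoint in U and one in W (i.e., W is an independent set). If H contains a path on 4k'+1 vertices for some integer k' ≥ 1, then H contains a path on 2k'+1 vertices both of whose endpoints lie in U. -/
/-!
Let `v₀, …, v₄ₖ` be the path and call an index good when its vertex lies in `U`; since `W` is
independent, of any two consecutive indices at least one is good. If no `i ≤ 2k` had `i` and
`i + 2k` both good, then two consecutive good indices `i, i + 1 ≤ 2k` would force the bad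
consecutive pair `i + 2k, i + 2k + 1`; so goodness alternates on `[0, 2k]`, whence `0` and `2k`
are both bad (they cannot both be good), and then `1` and `2k + 1` are both good.
-/

open SimpleGraph

theorem SimpleGraph.Walk.IsPath.exists_isPath_length_eq {V : Type*} {G : SimpleGraph V}
    {u v : V} {p : G.Walk u v} (hp : p.IsPath) {i m : ℕ} (h : i + m ≤ p.length) :
    ∃ q : G.Walk (p.getVert i) (p.getVert (i + m)), q.IsPath ∧ q.length = m :=
  ⟨((p.drop i).take m).copy rfl (p.drop_getVert i m), by simpa using (hp.drop i).take m,
    by simp only [Walk.length_copy, Walk.take_length, Walk.drop_length]; omega⟩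

theorem Nat.exists_and_add_of_forall_or_succ (P : ℕ → Prop) {k : ℕ} (hk : 1 ≤ k)
    (hP : ∀ i < 4 * k, P i ∨ P (i + 1)) : ∃ i ≤ 2 * k, P i ∧ P (i + 2 * k) := by
  by_contra! hfar
  have hsucc_iff : ∀ i < 2 * k, P (i + 1) ↔ ¬P i := by
    refine fun i hi => ⟨fun hi1 hi0 => ?_, fun hi0 => (hP i (by omega)).resolve_left hi0⟩
    rcases hP (i + 2 * k) (by omega) with h | h
    · exact hfar i hi.le hi0 h
    · exact hfar (i + 1) hi hi1 (by rwa [Nat.add_right_comm])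
  have heven_iff : ∀ j ≤ k, P (2 * j) ↔ P 0 := by
    intro j hj
    induction j with
    | zero => rfl
    | succ j ih =>
      rw [Nat.mul_succ, hsucc_iff _ (by omega), hsucc_iff _ (by omega), not_not, ih (by omega)]
  have h0 : ¬P 0 := fun h => hfar 0 (Nat.zero_le _) h (by simpa using (heven_iff k le_rfl).2 h)
  have h2k : ¬P (2 * k) := fun h => h0 ((heven_iff k le_rfl).1 h)
  have h1 : P 1 := by simpa using (hP 0 (by omega)).resolve_left h0
  exact hfar 1 (by omega) h1 (by rw [Nat.add_comm]; exact (hP (2 * k) (by omega)).resolve_left h2k)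

/-- if every edge of `H` has at least one endpoint in `U`
(i.e. the complement `W` of `U` is an independent set), and `H` contains a
path on `4k'+1` vertices (a path of length `4k'`), then `H` contains a path
on `2k'+1` vertices (length `2k'`) both of whose endpoints lie in `U`. -/
theorem stmt1 {V : Type*} (H : SimpleGraph V) (U : Set V)
    (hW : ∀ a b, H.Adj a b → a ∈ U ∨ b ∈ U)
    (k' : ℕ) (hk' : 1 ≤ k')
    (hpath : ∃ (x y : V) (p : H.Walk x y), p.IsPath ∧ p.length = 4 * k') :
    ∃ (u v : V) (q : H.Walk u v), u ∈ U ∧ v ∈ U ∧ q.IsPath ∧ q.length = 2 * k' := by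
  obtain ⟨x, y, p, hp, hlen⟩ := hpath
  obtain ⟨i, hi, hiU, hi'U⟩ := Nat.exists_and_add_of_forall_or_succ (fun i => p.getVert i ∈ U) hk'
    fun i hi => hW _ _ (p.adj_getVert_succ (by omega))
  obtain ⟨q, hq, hqlen⟩ := hp.exists_isPath_length_eq (i := i) (m := 2 * k') (by omega)
  exact ⟨_, _, q, hiU, hi'U, hq, hqlen⟩
end

section
/- Let k_1,...,k_t ≥ 2 be integers, k_i' = k_i - 1, and κ = Σ_{i=1}^t k_i'. Let H be a graph whose vertices are partitioned into two sets U and W with W an independent set (all edges lie within U or between U and W). If H contains a path on 4κ + t vertices, then H contains t pairwise vertex-disjoint paths, the i-th having 2k_i' + 1 vertices, such that all endpoints of all these paths lie in U. -/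
/-!
Cut the path into `t` consecutive blocks, the `i`-th on `4k_i' + 1` vertices. As `W` is
independent, no two consecutive vertices of a block lie outside `U`, and in such a block of
`4m + 1` vertices some two vertices at distance `2m` both lie in `U`. The sub-paths joining these
pairs lie in different blocks, so they are disjoint.
-/

open SimpleGraph Finset

lemma iff_even_iff_of_forall_succ_iff_not {R : ℕ → Prop} {N : ℕ}
    (h : ∀ n < N, (R (n + 1) ↔ ¬R n)) : ∀ n ≤ N, (R n ↔ (R 0 ↔ Even n)) := by
  intro n hn
  induction n with
  | zero => simp
  | succ n ih =>
    rw [h n (by omega), ih (by omega), Nat.even_add_one]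
    tauto

lemma succ_iff_not_of_forall_or_succ {P Q : ℕ → Prop} {N : ℕ}
    (hP : ∀ n < N, P n ∨ P (n + 1)) (hQ : ∀ n < N, Q n ∨ Q (n + 1))
    (hPQ : ∀ n ≤ N, ¬(P n ∧ Q n)) : ∀ n < N, (P (n + 1) ↔ ¬P n) := by
  intro n hn
  have := hP n hn
  have := hQ n hn
  have := hPQ n hn.le
  have := hPQ (n + 1) hn
  tauto

/-- If no `a ≤ 2m` works, exactly one of `f n`, `f (n + 2m)` holds for each `n ≤ 2m`, and both
`f` and `f (· + 2m)` alternate there. Hence `f 0 ↔ f (2m)`, contradicting `n = 0`. -/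
lemma exists_and_add_of_forall_or_succ {f : ℕ → Prop} {m : ℕ} (hm : 0 < m)
    (hf : ∀ n < 4 * m, f n ∨ f (n + 1)) : ∃ a ≤ 2 * m, f a ∧ f (a + 2 * m) := by
  by_contra! hno
  obtain ⟨Q, hQ_def⟩ : ∃ Q : ℕ → Prop, ∀ n, Q n ↔ f (n + 2 * m) := ⟨_, fun _ => Iff.rfl⟩
  have hP : ∀ n < 2 * m, f n ∨ f (n + 1) := fun n hn => hf n (by omega)
  have hQ : ∀ n < 2 * m, Q n ∨ Q (n + 1) := fun n hn => by
    simpa only [hQ_def, Nat.add_right_comm n 1] using hf (n + 2 * m) (by omega)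
  have hPQ : ∀ n ≤ 2 * m, ¬(f n ∧ Q n) := fun n hn h => hno n hn h.1 ((hQ_def n).mp h.2)
  have flipP := succ_iff_not_of_forall_or_succ hP hQ hPQ
  have flipQ := succ_iff_not_of_forall_or_succ hQ hP fun n hn h => hPQ n hn h.symm
  have evenP := iff_even_iff_of_forall_succ_iff_not flipP (2 * m) le_rfl
  have evenQ := iff_even_iff_of_forall_succ_iff_not flipQ (2 * m) le_rfl
  have hlink : Q 0 ↔ f (2 * m) := by rw [hQ_def, zero_add]
  have := flipP 0 (by omega)
  have := flipQ 0 (by omega)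
  have := hPQ 0 (by omega)
  have := hPQ 1 (by omega)
  simp only [even_two_mul, iff_true] at evenP evenQ
  tauto

namespace SimpleGraph.Walk

variable {V : Type*} {G : SimpleGraph V} {u v : V} {p : G.Walk u v}

lemma exists_getVert_eq_of_mem_support_take_drop {z : V} {a d : ℕ} (ha : a ≤ p.length)
    (hz : z ∈ ((p.drop a).take d).support) :
    ∃ n, a ≤ n ∧ n ≤ a + d ∧ n ≤ p.length ∧ p.getVert n = z := by
  obtain ⟨n, rfl, hn⟩ := mem_support_iff_exists_getVert.mp hz
  simp only [take_length, drop_length, take_getVert, drop_getVert] at hn ⊢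
  exact ⟨a + min d n, by omega, by omega, by omega, rfl⟩

lemma IsPath.disjoint_support_take_drop (hp : p.IsPath) {a d a' d' : ℕ} (h : a + d < a')
    (h' : a' ≤ p.length) :
    List.Disjoint ((p.drop a).take d).support ((p.drop a').take d').support := by
  intro z hz hz'
  obtain ⟨n, -, hn, hnp, rfl⟩ := exists_getVert_eq_of_mem_support_take_drop (by omega) hz
  obtain ⟨n', hn', -, hnp', hnn'⟩ := exists_getVert_eq_of_mem_support_take_drop h' hz'
  have := hp.getVert_injOn hnp' hnp hnn'
  omega

end SimpleGraph.Walk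

lemma exists_consecutive_offsets {ι : Type*} [Fintype ι] [LinearOrder ι]
    [LocallyFiniteOrderBot ι] (f : ι → ℕ) :
    ∃ o : ι → ℕ, (∀ i, o i + f i ≤ ∑ j, f j) ∧ ∀ i j, i < j → o i + f i ≤ o j := by
  refine ⟨fun i => ∑ j ∈ Iio i, f j, fun i => ?_, fun i j h => ?_⟩ <;>
    rw [sum_Iio_add_eq_sum_Iic]
  · exact sum_le_sum_of_subset (subset_univ _)
  · exact sum_le_sum_of_subset fun x hx => mem_Iio.mpr ((mem_Iic.mp hx).trans_lt h)

theorem stmt2_general {V : Type*} (H : SimpleGraph V) (U : Set V)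
    (hW : ∀ a b, H.Adj a b → a ∈ U ∨ b ∈ U)
    (t : ℕ) (k : Fin t → ℕ) (hk : ∀ i, 2 ≤ k i)
    (κ : ℕ) (hκ : κ = ∑ i, (k i - 1))
    (hpath : ∃ (x y : V) (p : H.Walk x y), p.IsPath ∧ p.length = 4 * κ + t - 1) :
    ∃ (u v : Fin t → V) (p : ∀ i, H.Walk (u i) (v i)),
      (∀ i, u i ∈ U ∧ v i ∈ U ∧ (p i).IsPath ∧ (p i).length = 2 * (k i - 1)) ∧
      ∀ i j, i ≠ j → List.Disjoint (p i).support (p j).support := by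
  obtain ⟨x, y, p, hp, hlen⟩ := hpath
  obtain ⟨o, ho_le, ho_lt⟩ := exists_consecutive_offsets fun i => 4 * (k i - 1) + 1
  have hsum : ∑ i, (4 * (k i - 1) + 1) = 4 * κ + t := by simp [hκ, sum_add_distrib, mul_sum]
  have hsegment (i : Fin t) : ∃ a, o i ≤ a ∧ a ≤ o i + 2 * (k i - 1) ∧
      p.getVert a ∈ U ∧ p.getVert (a + 2 * (k i - 1)) ∈ U := by
    have := ho_le i
    obtain ⟨a, ha, hfa⟩ := exists_and_add_of_forall_or_succ (f := fun n => p.getVert (o i + n) ∈ U)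
      (m := k i - 1) (by have := hk i; omega)
      fun n hn => hW _ _ (p.adj_getVert_succ (by omega))
    exact ⟨o i + a, by omega, by omega, by simpa [add_assoc] using hfa⟩
  choose a hoa hao haU haU' using hsegment
  have hend (i : Fin t) : a i + 2 * (k i - 1) ≤ p.length := by
    have := ho_le i; have := hao i
    omega
  refine ⟨fun i => p.getVert (a i), fun i => (p.drop (a i)).getVert (2 * (k i - 1)),
    fun i => (p.drop (a i)).take (2 * (k i - 1)), fun i => ?_, fun i j hij => ?_⟩
  · refine ⟨haU i, by simpa using haU' i, (hp.drop _).take _, ?_⟩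
    have := hend i
    simp only [Walk.take_length, Walk.drop_length]
    omega
  · have hsep {i j : Fin t} (h : i < j) : a i + 2 * (k i - 1) < a j := by
      have := ho_lt i j h; have := hao i; have := hoa j
      omega
    rcases hij.lt_or_gt with h | h
    · exact hp.disjoint_support_take_drop (hsep h) (by have := hend j; omega)
    · exact (hp.disjoint_support_take_drop (hsep h) (by have := hend i; omega)).symm

/-- if every edge of `H` has at least one endpoint in `U`
(`W = Uᶜ` is independent), `k i ≥ 2` for all `i`, `κ = ∑ (k i - 1)`, and `H`
contains a path on `4κ + t` vertices (length `4κ + t - 1`), then `H` contains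
`t` pairwise vertex-disjoint paths, the `i`-th on `2(k i - 1) + 1` vertices,
with all endpoints in `U`. -/
theorem stmt2 {V : Type*} (H : SimpleGraph V) (U : Set V)
    (hW : ∀ a b, H.Adj a b → a ∈ U ∨ b ∈ U)
    (t : ℕ) (ht : 1 ≤ t) (k : Fin t → ℕ) (hk : ∀ i, 2 ≤ k i)
    (κ : ℕ) (hκ : κ = ∑ i, (k i - 1))
    (hpath : ∃ (x y : V) (p : H.Walk x y), p.IsPath ∧ p.length = 4 * κ + t - 1) :
    ∃ (u v : Fin t → V) (p : ∀ i, H.Walk (u i) (v i)),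
      (∀ i, u i ∈ U ∧ v i ∈ U ∧ (p i).IsPath ∧ (p i).length = 2 * (k i - 1)) ∧
      ∀ i j, i ≠ j → List.Disjoint (p i).support (p j).support :=
  stmt2_general H U hW t k hk κ hκ hpath
end

section
/- (Erdős–Gallai) Any graph on n vertices containing no path on ℓ vertices as a subgraph has at most (ℓ-2)·n/2 edges. -/
/-!
It suffices to find, in every nonempty subgraph `H`, a nonempty set `T` of non-isolated vertices
meeting at most `(ℓ - 2) * #T / 2` edges of `H`: deleting those edges isolates `T`, and induction
on the subgraph order finishes. Take a longest path `x = v₀, …, v_k = y` of `H`, so `k ≤ ℓ - 2`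
and every neighbour of `x` or `y` lies on the path. If `deg x + deg y ≤ k`, take `T = {x, y}`.
Otherwise, by pigeonhole, `x ~ v_{i+1}` and `y ~ v_i` for some `i`, and
`y, v_i, …, v_0, v_{i+1}, …, v_k` is a closed walk through the whole path without repeated
vertices. A vertex off the path adjacent to it would extend a rotation of this closed walk to a
path longer than `k`, so the vertex set of the path is closed under adjacency and, taken as `T`,
meets at most `(k + 1) * k / 2` edges.
-/

open Finset

namespace SimpleGraph

variable {V : Type*} {G : SimpleGraph V} {u v w x y : V}

theorem ncard_neighborSet_le_of_subset_image {g : ℕ → V} {k : ℕ}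
    (h : G.neighborSet u ⊆ g '' Set.Iio k) :
    (G.neighborSet u).ncard ≤ {i | i < k ∧ G.Adj u (g i)}.ncard := by
  have hfin : {i | i < k ∧ G.Adj u (g i)}.Finite := (Set.finite_Iio k).subset fun _ h => h.1
  refine (Set.ncard_le_ncard (fun z hz => ?_) (hfin.image g)).trans (Set.ncard_image_le hfin)
  obtain ⟨i, hi, rfl⟩ := h hz
  exact ⟨i, ⟨hi, hz⟩, rfl⟩

theorem ncard_incidenceSet_eq_ncard_neighborSet (v : V) :
    (G.incidenceSet v).ncard = (G.neighborSet v).ncard := by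
  classical exact Set.ncard_congr' (G.incidenceSetEquivNeighborSet v)

theorem two_mul_ncard_biUnion_incidenceSet_le {T : Finset V}
    (hT : ∀ v ∈ T, ∀ w, G.Adj v w → w ∈ T) :
    2 * (⋃ v ∈ T, G.incidenceSet v).ncard ≤ #T * (#T - 1) := by
  classical
  have hsub : (⋃ v ∈ T, G.incidenceSet v) ⊆ (T.offDiag.image Sym2.mk.uncurry : Finset _) := by
    refine Set.iUnion₂_subset fun v hv e ⟨he, hve⟩ => ?_
    obtain ⟨w, rfl⟩ := Sym2.mem_iff_exists.mp hve
    exact mem_image.mpr ⟨(v, w), mem_offDiag.mpr ⟨hv, hT v hv w he, he.ne⟩, rfl⟩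
  calc 2 * (⋃ v ∈ T, G.incidenceSet v).ncard
      ≤ 2 * #(T.offDiag.image Sym2.mk.uncurry) := by
        rw [← Set.ncard_coe_finset]; exact Nat.mul_le_mul_left 2 (Set.ncard_le_ncard hsub)
    _ = #T * (#T - 1) := by rw [Sym2.two_mul_card_image_offDiag, offDiag_card, Nat.mul_sub_one]

namespace Walk

theorem exists_loop_support_tail_perm_of_adj {p : G.Walk x y} {i : ℕ} (hi : i < p.length)
    (hx : G.Adj x (p.getVert (i + 1))) (hy : G.Adj y (p.getVert i)) :
    ∃ c : G.Walk y y, c.support.tail.Perm p.support := by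
  refine ⟨cons hy ((p.take i).reverse.append (cons hx (p.drop (i + 1)))), ?_⟩
  rw [support_cons, List.tail_cons, support_append, support_reverse, support_take,
    support_cons, List.tail_cons, drop_support_eq_support_drop_min,
    Nat.min_eq_left (by omega : i + 1 ≤ p.length)]
  exact ((List.reverse_perm _).append_right _).trans (by rw [List.take_append_drop])

theorem exists_isPath_length_eq_of_nodup_support_tail {c : G.Walk u u}
    (hc : c.support.tail.Nodup) (hv : v ∈ c.support) (hw : w ∉ c.support) (hvw : G.Adj v w) :
    ∃ (a : V) (q : G.Walk a w), q.IsPath ∧ q.length = c.length := by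
  classical
  by_cases hnil : c.Nil
  · exact ⟨w, nil, .nil, by simp [hnil.length_eq_zero]⟩
  set c' := c.rotate v hv
  have hnil' : ¬ c'.Nil := by simpa [c'] using hnil
  have hpath : c'.tail.IsPath := by
    rw [isPath_def, support_tail_of_not_nil _ hnil']
    exact (support_rotate c v hv).perm.nodup_iff.mpr hc
  have hw' : w ∉ c'.tail.support := by
    rw [support_tail_of_not_nil _ hnil']
    exact fun h => hw ((mem_support_rotate_iff c v hv).mp (List.mem_of_mem_tail h))
  refine ⟨_, c'.tail.concat hvw, hpath.concat hw' hvw, ?_⟩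
  rw [length_concat, length_tail, length_rotate]
  have : c.length ≠ 0 := fun h => hnil (length_eq_zero_iff.mp h)
  omega

theorem mem_support_of_adj_start {p : G.Walk x y} (hp : p.IsPath)
    (hmax : ∀ (a b : V) (q : G.Walk a b), q.IsPath → q.length ≤ p.length) (hxw : G.Adj x w) :
    w ∈ p.support := by
  by_contra hw
  simpa using hmax _ _ (.cons hxw.symm p) (hp.cons hw)

theorem mem_support_of_adj_end {p : G.Walk x y} (hp : p.IsPath)
    (hmax : ∀ (a b : V) (q : G.Walk a b), q.IsPath → q.length ≤ p.length) (hyw : G.Adj y w) :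
    w ∈ p.support := by
  simpa using p.reverse.mem_support_of_adj_start hp.reverse (by simpa using hmax) hyw

theorem mem_support_of_adj_of_crossing {p : G.Walk x y} (hp : p.IsPath)
    (hmax : ∀ (a b : V) (q : G.Walk a b), q.IsPath → q.length ≤ p.length) {i : ℕ}
    (hi : i < p.length) (hx : G.Adj x (p.getVert (i + 1))) (hy : G.Adj y (p.getVert i))
    (hv : v ∈ p.support) (hvw : G.Adj v w) : w ∈ p.support := by
  obtain ⟨c, hc⟩ := exists_loop_support_tail_perm_of_adj hi hx hy
  have hmem : ∀ z, z ∈ c.support ↔ z ∈ p.support := fun z => by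
    rw [← c.cons_tail_support, List.mem_cons, hc.mem_iff]
    exact or_iff_right_of_imp fun h => h ▸ p.end_mem_support
  have hlen : c.length = p.length + 1 := by
    have := hc.length_eq
    rw [List.length_tail, length_support, length_support] at this
    omega
  by_contra hw
  obtain ⟨a, q, hq, hqlen⟩ := exists_isPath_length_eq_of_nodup_support_tail
    (hc.nodup_iff.mpr hp.support_nodup) ((hmem v).mpr hv) (mt (hmem w).mp hw) hvw
  have := hmax a w q hq
  omega

theorem exists_crossing_of_lt_ncard_add_ncard {p : G.Walk x y}
    (hx : ∀ w, G.Adj x w → w ∈ p.support) (hy : ∀ w, G.Adj y w → w ∈ p.support)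
    (hdeg : p.length < (G.neighborSet x).ncard + (G.neighborSet y).ncard) :
    ∃ i < p.length, G.Adj x (p.getVert (i + 1)) ∧ G.Adj y (p.getVert i) := by
  have hA := ncard_neighborSet_le_of_subset_image (g := fun i => p.getVert (i + 1)) (k := p.length)
    fun z hz => by
      obtain ⟨n, rfl, hn⟩ := mem_support_iff_exists_getVert.mp (hx z hz)
      have : n ≠ 0 := by rintro rfl; exact G.irrefl (p.getVert_zero ▸ hz)
      exact ⟨n - 1, by simp only [Set.mem_Iio]; omega, by simp only; congr 1; omega⟩
  have hB := ncard_neighborSet_le_of_subset_image (g := p.getVert) (k := p.length)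
    fun z hz => by
      obtain ⟨n, rfl, hn⟩ := mem_support_iff_exists_getVert.mp (hy z hz)
      have : n ≠ p.length := by rintro rfl; exact G.irrefl (p.getVert_length ▸ hz)
      exact ⟨n, by simp only [Set.mem_Iio]; omega, rfl⟩
  set A := {i | i < p.length ∧ G.Adj x (p.getVert (i + 1))}
  set B := {i | i < p.length ∧ G.Adj y (p.getVert i)}
  have hfin : (Set.Iio p.length).Finite := Set.finite_Iio _
  have hunion : (A ∪ B).ncard ≤ p.length := by
    simpa using Set.ncard_le_ncard (Set.union_subset (fun _ h => h.1) (fun _ h => h.1)) hfin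
  have := Set.ncard_union_add_ncard_inter A B (hfin.subset fun _ h => h.1)
    (hfin.subset fun _ h => h.1)
  obtain ⟨i, ⟨hi, hxi⟩, -, hyi⟩ := Set.nonempty_of_ncard_ne_zero (s := A ∩ B) (by omega)
  exact ⟨i, hi, hxi, hyi⟩

end Walk

theorem two_mul_ncard_edgeSet_le_of_forall_exists_finset [Finite V] (c : ℕ)
    (h : ∀ H ≤ G, H ≠ ⊥ → ∃ T : Finset V, T.Nonempty ∧ ↑T ⊆ H.support ∧
      2 * (⋃ v ∈ T, H.incidenceSet v).ncard ≤ c * #T) :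
    2 * G.edgeSet.ncard ≤ c * G.support.ncard := by
  induction G using WellFoundedLT.induction with
  | _ G ih =>
  by_cases hG : G = ⊥
  · simp [hG]
  obtain ⟨T, ⟨t, ht⟩, hTsupp, hT⟩ := h G le_rfl hG
  set X := ⋃ v ∈ T, G.incidenceSet v
  have hX : X ⊆ G.edgeSet := Set.iUnion₂_subset fun v _ => G.incidenceSet_subset v
  have hedges : (G.deleteEdges X).edgeSet.ncard + X.ncard = G.edgeSet.ncard := by
    rw [edgeSet_deleteEdges]
    exact Set.ncard_sdiff_add_ncard_of_subset hX
  have hsupp : (G.deleteEdges X).support ⊆ G.support \ ↑T := by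
    intro v hv
    obtain ⟨w, hvw⟩ := (mem_support _).mp hv
    rw [deleteEdges_adj] at hvw
    exact ⟨(mem_support _).mpr ⟨w, hvw.1⟩,
      fun hv => hvw.2 (Set.mem_biUnion hv ⟨hvw.1, Sym2.mem_mk_left v w⟩)⟩
  have hlt : G.deleteEdges X < G := by
    refine lt_of_le_of_ne (deleteEdges_le X) fun heq => ?_
    obtain ⟨w, htw⟩ := (mem_support _).mp (hTsupp ht)
    have : s(t, w) ∈ (G.deleteEdges X).edgeSet := by rw [heq]; exact htw
    rw [edgeSet_deleteEdges] at this
    exact this.2 (Set.mem_biUnion ht ⟨htw, Sym2.mem_mk_left t w⟩)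
  have ih' := ih _ hlt fun H hH => h H (hH.trans hlt.le)
  have hcard : (G.deleteEdges X).support.ncard + #T ≤ G.support.ncard := by
    rw [← Set.ncard_coe_finset, ← Set.ncard_sdiff_add_ncard_of_subset hTsupp]
    exact Nat.add_le_add_right (Set.ncard_le_ncard hsupp) _
  calc 2 * G.edgeSet.ncard = 2 * (G.deleteEdges X).edgeSet.ncard + 2 * X.ncard := by omega
    _ ≤ c * (G.deleteEdges X).support.ncard + c * #T := add_le_add ih' hT
    _ ≤ c * G.support.ncard := by rw [← mul_add]; exact Nat.mul_le_mul_left c hcard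

theorem exists_finset_two_mul_ncard_biUnion_incidenceSet_le [Finite V] {m : ℕ}
    (hG : ∀ (u v : V) (p : G.Walk u v), p.IsPath → p.length ≤ m) (hne : G ≠ ⊥) :
    ∃ T : Finset V, T.Nonempty ∧ ↑T ⊆ G.support ∧
      2 * (⋃ v ∈ T, G.incidenceSet v).ncard ≤ m * #T := by
  classical
  obtain ⟨a, b, hab⟩ := ne_bot_iff_exists_adj.mp hne
  have : Nonempty V := ⟨a⟩
  obtain ⟨x, y, p, hp, hmax⟩ := Walk.exists_isPath_forall_isPath_length_le_length G
  have hk : 1 ≤ p.length := by simpa using hmax a b hab.toWalk hab.isPath_toWalk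
  have hkm : p.length ≤ m := hG x y p hp
  have hnil : ¬ p.Nil := fun h => by simp [h.length_eq_zero] at hk
  have hsupp : ∀ v ∈ p.support, v ∈ G.support := fun v hv =>
    mem_support_of_mem_walk_support p hnil hv
  by_cases hdeg : (G.neighborSet x).ncard + (G.neighborSet y).ncard ≤ p.length
  · have hxy : x ≠ y := fun h => hnil (hp.nil_iff_eq.mpr h)
    refine ⟨{x, y}, insert_nonempty x {y}, ?_, ?_⟩
    · simpa [Set.insert_subset_iff] using ⟨hsupp x p.start_mem_support, hsupp y p.end_mem_support⟩
    calc 2 * (⋃ v ∈ ({x, y} : Finset V), G.incidenceSet v).ncard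
        = 2 * (G.incidenceSet x ∪ G.incidenceSet y).ncard := by simp
      _ ≤ 2 * ((G.neighborSet x).ncard + (G.neighborSet y).ncard) := by
        rw [← ncard_incidenceSet_eq_ncard_neighborSet, ← ncard_incidenceSet_eq_ncard_neighborSet]
        exact Nat.mul_le_mul_left 2 (Set.ncard_union_le _ _)
      _ ≤ m * #{x, y} := by rw [card_pair hxy]; omega
  · obtain ⟨i, hi, hxi, hyi⟩ := p.exists_crossing_of_lt_ncard_add_ncard
      (fun _ => p.mem_support_of_adj_start hp hmax) (fun _ => p.mem_support_of_adj_end hp hmax)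
      (by omega)
    have hcard : #p.support.toFinset = p.length + 1 := by
      rw [List.toFinset_card_of_nodup hp.support_nodup, Walk.length_support]
    refine ⟨p.support.toFinset, ⟨x, by simp⟩, fun v hv => hsupp v (by simpa using hv), ?_⟩
    calc _ ≤ #p.support.toFinset * (#p.support.toFinset - 1) :=
          two_mul_ncard_biUnion_incidenceSet_le fun v hv w hvw => by
            simpa using p.mem_support_of_adj_of_crossing hp hmax hi hxi hyi (by simpa using hv) hvw
      _ ≤ m * #p.support.toFinset := by
        rw [hcard, Nat.add_sub_cancel, mul_comm]; exact Nat.mul_le_mul_right _ hkm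

end SimpleGraph

/-- Erdős–Gallai: a graph on `n` vertices containing no path on
`ℓ` vertices (i.e. no simple path of length `ℓ - 1`) has at most `(ℓ-2)·n/2`
edges. -/
theorem stmt3 {V : Type*} [Fintype V] (G : SimpleGraph V) (ℓ : ℕ)
    (hfree : ¬ ∃ (x y : V) (p : G.Walk x y), p.IsPath ∧ p.length = ℓ - 1) :
    (G.edgeSet.ncard : ℝ) ≤ ((ℓ : ℝ) - 2) * (Fintype.card V) / 2 := by
  rcases isEmpty_or_nonempty V with hV | ⟨⟨v⟩⟩
  · simp [Set.eq_empty_of_isEmpty G.edgeSet]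
  have hpath : ∀ (u w : V) (p : G.Walk u w), p.IsPath → p.length ≤ ℓ - 2 := by
    intro u w p hp
    by_contra! h
    exact hfree ⟨u, _, p.take (ℓ - 1), hp.take _, by simp; omega⟩
  have hℓ : 2 ≤ ℓ := by
    by_contra! h
    exact hfree ⟨v, v, .nil, .nil, by simp; omega⟩
  have key := G.two_mul_ncard_edgeSet_le_of_forall_exists_finset (ℓ - 2) fun H hH hne =>
    H.exists_finset_two_mul_ncard_biUnion_incidenceSet_le
      (fun u w p hp => p.length_mapLe hH ▸ hpath u w _ (hp.mapLe hH)) hne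
  have hsupp : G.support.ncard ≤ Fintype.card V := by
    simpa [Set.ncard_univ] using Set.ncard_le_ncard (Set.subset_univ G.support)
  have : (2 * G.edgeSet.ncard : ℝ) ≤ (ℓ - 2 : ℕ) * Fintype.card V := by
    exact_mod_cast key.trans (Nat.mul_le_mul_left _ hsupp)
  rw [Nat.cast_sub hℓ] at this
  push_cast at this
  linarith
end

section
/- Let t ≥ 1, k_i' ≥ 1 for 1 ≤ i ≤ t, and κ = Σ_{i=1}^t k_i'. Let Ĥ be a graph on n vertices with vertex partition U ⊔ W. If e(U) + e(U,W) > (4κ + t - 2)·n/2 (where e(U) is the number of edges within U and e(U,W) the number of edges between U and W), then Ĥ contains t pairwise vertex-disjoint paths, the i-th on 2k_i' + 1 vertices, with all endpoints in U. -/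
/-- `eW G U` is the number of edges of `G` with both endpoints in `U`. -/
noncomputable def eW {V : Type*} (G : SimpleGraph V) (U : Set V) : ℕ :=
  {e ∈ G.edgeSet | ∀ v ∈ e, v ∈ U}.ncard

/-- `eB G U W` is the number of edges of `G` with one endpoint in `U` and the
other in `W`. -/
noncomputable def eB {V : Type*} (G : SimpleGraph V) (U W : Set V) : ℕ :=
  {e ∈ G.edgeSet | ∃ u ∈ U, ∃ w ∈ W, e = s(u, w)}.ncard

/-!
Let `G` be the graph of those edges of `Ĥ` that meet `U`, so `2 e(G) = 2 (e(U) + e(U, W)) > c n`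
with `c = 4κ + t - 2`. By the Erdős–Gallai theorem `G` contains a path `P` with more than `c`
edges: a smallest vertex set `B` with `c |B| < 2 e(G[B])` has minimum degree above `c / 2` and is
connected. A longest path in `G[B]` either has endpoints whose neighbourhoods, shifted by one
along the path, are disjoint, which forces more than `c` edges, or closes into a cycle through a
crossing pair of edges (Pósa), which by maximality and connectivity spans `B`, and `|B| ≥ c + 2`.

Every edge of `P` meets `U`, so of two consecutive vertices of `P` at least one lies in `U`. If
from a vertex `p ∈ U` no window `[s, s + 2k]` with `p ≤ s < p + 2k` had both ends in `U`,
membership in `U` would alternate along `p, p + 2, …` and fail at `p + 2k`. So greedily `P`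
contains `t` disjoint windows of `2 k_i'` edges with both ends in `U`, the `i`-th consuming at
most `4 k_i' + 1` vertices of `P`.
-/

open Finset

section Intervals

variable {S : ℕ → Prop} {L : ℕ}

theorem exists_pair_at_distance (hS : ∀ j < L, S j ∨ S (j + 1)) {p k : ℕ} (hp : S p)
    (hk : 1 ≤ k) (hpL : p + 4 * k ≤ L + 1) :
    ∃ s, p ≤ s ∧ s < p + 2 * k ∧ s + 2 * k ≤ L ∧ S s ∧ S (s + 2 * k) := by
  by_contra! hcon
  have alternate : ∀ m < k, S (p + 2 * m) ∧ ¬S (p + 2 * m + 2 * k) := by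
    intro m
    induction m with
    | zero => exact fun _ => ⟨hp, hcon p le_rfl (by omega) (by omega) hp⟩
    | succ m ih =>
      intro hm
      obtain ⟨-, hfar⟩ := ih (by omega)
      have hfar' : S (p + 2 * m + 2 * k + 1) := (hS _ (by omega)).resolve_left hfar
      have hodd : ¬S (p + 2 * m + 1) := fun h =>
        hcon _ (by omega) (by omega) (by omega) h (by convert hfar' using 1; ring)
      have heven : S (p + 2 * (m + 1)) := by
        convert (hS _ (by omega)).resolve_left hodd using 1; ring
      exact ⟨heven, hcon _ (by omega) (by omega) (by omega) heven⟩
  obtain ⟨m, rfl⟩ : ∃ m, k = m + 1 := ⟨k - 1, by omega⟩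
  have hlast := (alternate m (by omega)).2
  have hfar : S (p + 2 * m + 2 * (m + 1) + 1) := (hS _ (by omega)).resolve_left hlast
  have hodd : ¬S (p + 2 * m + 1) := fun h =>
    hcon _ (by omega) (by omega) (by omega) h (by convert hfar using 1; ring)
  have hmid : S (p + 2 * m + 1 + 1) := (hS _ (by omega)).resolve_left hodd
  exact (alternate 0 (by omega)).2 (by convert hmid using 1; ring)

theorem exists_separated_pairs (hS : ∀ j < L, S j ∨ S (j + 1)) :
    ∀ {t : ℕ} (k : Fin t → ℕ), (∀ i, 1 ≤ k i) → ∀ {p : ℕ}, p + 4 * ∑ i, k i + t ≤ L + 1 →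
      ∃ s : Fin t → ℕ, (∀ i, p ≤ s i ∧ s i + 2 * k i ≤ L ∧ S (s i) ∧ S (s i + 2 * k i)) ∧
        ∀ i j, i < j → s i + 2 * k i < s j := by
  intro t
  induction t with
  | zero => exact fun _ _ _ _ => ⟨Fin.elim0, fun i => i.elim0, fun i => i.elim0⟩
  | succ t ih =>
    intro k hk p hp
    rw [Fin.sum_univ_succ] at hp
    obtain ⟨p₀, hpp₀, hp₀⟩ : ∃ p₀, p ≤ p₀ ∧ p₀ ≤ p + 1 ∧ S p₀ := by
      have := hk 0
      rcases hS p (by omega) with h | h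
      exacts [⟨p, le_rfl, by omega, h⟩, ⟨p + 1, by omega, le_rfl, h⟩]
    obtain ⟨s₀, hs₀, hs₀', hs₀L, hSs₀, hSs₀'⟩ :=
      exists_pair_at_distance hS hp₀.2 (hk 0) (by omega)
    obtain ⟨s, hs, hord⟩ := ih (fun i => k i.succ) (fun i => hk i.succ)
      (p := s₀ + 2 * k 0 + 1) (by omega)
    refine ⟨Fin.cons s₀ s, fun i => ?_, fun i j hij => ?_⟩
    · cases i using Fin.cases with
      | zero => exact ⟨by simp; omega, hs₀L, hSs₀, hSs₀'⟩
      | succ i =>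
        obtain ⟨h₁, h₂⟩ := hs i
        exact ⟨by simp; omega, h₂⟩
    · cases j using Fin.cases with
      | zero => exact absurd hij (Fin.not_lt_zero i)
      | succ j =>
        cases i using Fin.cases with
        | zero => simpa using (by have := (hs j).1; omega : s₀ + 2 * k 0 < s j)
        | succ i => simpa using hord i j (Fin.succ_lt_succ_iff.1 hij)

end Intervals

namespace SimpleGraph

variable {V : Type*} (G : SimpleGraph V)

section DegreesIn

variable [DecidableRel G.Adj]

def degreeIn (A : Finset V) (v : V) : ℕ := #{w ∈ A | G.Adj v w}

def sumDegreesIn (A : Finset V) : ℕ := ∑ v ∈ A, G.degreeIn A v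

variable {G} {A : Finset V}

theorem degreeIn_lt_card {v : V} (hv : v ∈ A) : G.degreeIn A v < #A :=
  card_lt_card (filter_ssubset.2 ⟨v, hv, G.irrefl⟩)

theorem sumDegreesIn_le_card_mul : G.sumDegreesIn A ≤ #A * (#A - 1) := by
  simpa [sumDegreesIn] using
    sum_le_sum fun v hv => Nat.le_sub_one_of_lt (degreeIn_lt_card (G := G) hv)

variable [DecidableEq V]

theorem sumDegreesIn_erase_add {v : V} (hv : v ∈ A) :
    G.sumDegreesIn (A.erase v) + 2 * G.degreeIn A v = G.sumDegreesIn A := by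
  have hdeg : ∀ w, G.degreeIn A w = (if G.Adj w v then 1 else 0) + G.degreeIn (A.erase v) w := by
    intro w
    simp only [degreeIn, card_filter]
    exact (add_sum_erase A _ hv).symm
  have hback : ∑ w ∈ A.erase v, (if G.Adj w v then 1 else 0) = G.degreeIn A v := by
    rw [degreeIn, card_filter, ← sum_erase A (a := v) (by simp)]
    simp only [G.adj_comm]
  rw [sumDegreesIn, sumDegreesIn, ← add_sum_erase A _ hv, sum_congr rfl fun w _ => hdeg w,
    sum_add_distrib, hback]
  ring

theorem sumDegreesIn_union {A₁ A₂ : Finset V} (hd : Disjoint A₁ A₂)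
    (hcross : ∀ x ∈ A₁, ∀ y ∈ A₂, ¬G.Adj x y) :
    G.sumDegreesIn (A₁ ∪ A₂) = G.sumDegreesIn A₁ + G.sumDegreesIn A₂ := by
  have h₁ : ∀ x ∈ A₁, G.degreeIn (A₁ ∪ A₂) x = G.degreeIn A₁ x := fun x hx => by
    rw [degreeIn, degreeIn, filter_union, filter_false_of_mem (hcross x hx), union_empty]
  have h₂ : ∀ x ∈ A₂, G.degreeIn (A₁ ∪ A₂) x = G.degreeIn A₂ x := fun x hx => by
    rw [degreeIn, degreeIn, filter_union,
      filter_false_of_mem fun y hy h => hcross y hy x hx h.symm, empty_union]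
  rw [sumDegreesIn, sum_union hd, sum_congr rfl h₁, sum_congr rfl h₂, sumDegreesIn, sumDegreesIn]

variable (G) in
structure IsDenseCore (c : ℕ) (B : Finset V) : Prop where
  mul_card_lt : c * #B < G.sumDegreesIn B
  lt_two_mul_degreeIn : ∀ v ∈ B, c < 2 * G.degreeIn B v
  exists_adj_sdiff : ∀ R ⊆ B, R.Nonempty → R ≠ B → ∃ x ∈ R, ∃ y ∈ B \ R, G.Adj x y

theorem exists_isDenseCore (c : ℕ) (hA : c * #A < G.sumDegreesIn A) :
    ∃ B ⊆ A, G.IsDenseCore c B := by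
  obtain ⟨B, hB, hmin⟩ := exists_min_image {B ∈ A.powerset | c * #B < G.sumDegreesIn B} card
    ⟨A, by simpa using hA⟩
  rw [mem_filter, mem_powerset] at hB
  have hmin' : ∀ B' ⊆ B, c * #B' < G.sumDegreesIn B' → #B ≤ #B' := fun B' hB' hd =>
    hmin B' (by simpa using ⟨hB'.trans hB.1, hd⟩)
  refine ⟨B, hB.1, hB.2, fun v hv => ?_, fun R hRB hR hRB' => ?_⟩
  · by_contra! hlow
    have hsum := G.sumDegreesIn_erase_add hv
    have hcard := card_erase_add_one hv
    have := hmin' (B.erase v) (erase_subset v B) (by nlinarith [hB.2])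
    omega
  · by_contra! hsep
    have hsplit := G.sumDegreesIn_union disjoint_sdiff fun x hx y hy => hsep x hx y hy
    rw [union_sdiff_of_subset hRB] at hsplit
    have hcard := card_sdiff_add_card_eq_card hRB
    have hR' : #R < #B := card_lt_card (Finset.ssubset_iff_subset_ne.2 ⟨hRB, hRB'⟩)
    have hBR : #(B \ R) < #B := by have := hR.card_pos; omega
    rcases lt_or_ge (c * #R) (G.sumDegreesIn R) with hRd | hRd
    · exact absurd (hmin' R hRB hRd) (by omega)
    · have := hmin' (B \ R) sdiff_subset (by nlinarith [hB.2])
      omega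

theorem IsDenseCore.add_two_le_card {c : ℕ} {B : Finset V} (hB : G.IsDenseCore c B) :
    c + 2 ≤ #B := by
  have := hB.mul_card_lt.trans_le sumDegreesIn_le_card_mul
  rw [mul_comm] at this
  have := Nat.lt_of_mul_lt_mul_left this
  omega

end DegreesIn

section PathIn

structure IsPathIn (B : Finset V) (xs : List V) : Prop where
  isChain : xs.IsChain G.Adj
  nodup : xs.Nodup
  mem : ∀ x ∈ xs, x ∈ B

structure IsLongestPathIn (B : Finset V) (xs : List V) : Prop where
  isPathIn : G.IsPathIn B xs
  length_le : ∀ ys, G.IsPathIn B ys → ys.length ≤ xs.length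

variable {G} {B : Finset V} {xs : List V}

theorem IsPathIn.reverse (h : G.IsPathIn B xs) : G.IsPathIn B xs.reverse :=
  ⟨List.isChain_reverse.2 (h.isChain.imp fun _ _ hab => hab.symm), List.nodup_reverse.2 h.nodup,
    fun x hx => h.mem x (List.mem_reverse.1 hx)⟩

theorem IsPathIn.length_le_card (h : G.IsPathIn B xs) : xs.length ≤ #B := by
  classical
  rw [← List.toFinset_card_of_nodup h.nodup]
  exact card_le_card fun x hx => h.mem x (List.mem_toFinset.1 hx)

theorem IsLongestPathIn.reverse (h : G.IsLongestPathIn B xs) : G.IsLongestPathIn B xs.reverse :=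
  ⟨h.isPathIn.reverse, fun ys hys => by simpa using h.length_le ys hys⟩

theorem exists_isLongestPathIn (hB : B.Nonempty) : ∃ xs, G.IsLongestPathIn B xs ∧ xs ≠ [] := by
  classical
  obtain ⟨b, hb⟩ := hB
  let P : ℕ → Prop := fun m => ∃ xs, G.IsPathIn B xs ∧ xs.length = m
  have h1 : P 1 := ⟨[b], ⟨List.isChain_singleton b, List.nodup_singleton b, by simpa⟩, rfl⟩
  have hcard : 1 ≤ #B := card_pos.2 ⟨b, hb⟩
  obtain ⟨xs, hxs, hlen⟩ := Nat.findGreatest_spec hcard h1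
  refine ⟨xs, ⟨hxs, fun ys hys => hlen ▸ Nat.le_findGreatest hys.length_le_card ⟨ys, hys, rfl⟩⟩,
    fun hnil => ?_⟩
  have := Nat.le_findGreatest hcard h1
  simp [hnil] at hlen
  omega

theorem IsLongestPathIn.mem_of_adj_head (h : G.IsLongestPathIn B xs) {a y : V}
    (ha : a ∈ xs.head?) (hy : y ∈ B) (hay : G.Adj a y) : y ∈ xs := by
  by_contra hyx
  have hlonger : G.IsPathIn B (y :: xs) :=
    ⟨List.isChain_cons.2 ⟨fun b hb => Option.mem_unique ha hb ▸ hay.symm, h.isPathIn.isChain⟩,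
      List.nodup_cons.2 ⟨hyx, h.isPathIn.nodup⟩, by simpa [hy] using h.isPathIn.mem⟩
  simpa using h.length_le _ hlonger

theorem IsLongestPathIn.mem_of_adj_getLast (h : G.IsLongestPathIn B xs) {b y : V}
    (hb : b ∈ xs.getLast?) (hy : y ∈ B) (hby : G.Adj b y) : y ∈ xs :=
  List.mem_reverse.1 <| h.reverse.mem_of_adj_head (by rwa [List.head?_reverse]) hy hby

theorem IsLongestPathIn.mem_of_adj_of_cycle (h : G.IsLongestPathIn B xs) {ys : List V}
    (hperm : ys.Perm xs) (hys : ys.IsChain G.Adj)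
    (hwrap : ∀ x ∈ ys.getLast?, ∀ y ∈ ys.head?, G.Adj x y) {z y : V} (hz : z ∈ xs)
    (hy : y ∈ B) (hzy : G.Adj z y) : y ∈ xs := by
  by_contra hyx
  obtain ⟨s, r, rfl⟩ := List.append_of_mem (hperm.mem_iff.2 hz)
  have hrot : (z :: r ++ s).IsChain G.Adj := by
    rw [List.isChain_append] at hys ⊢
    refine ⟨hys.2.1, hys.1, fun a ha b hb => hwrap a ?_ b ?_⟩
    · rwa [List.getLast?_append_of_ne_nil _ (List.cons_ne_nil _ _)]
    · simp [List.head?_append, Option.mem_def.1 hb]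
  have hperm' : (y :: (z :: r ++ s)).Perm (y :: xs) := (List.perm_append_comm.trans hperm).cons y
  have hlonger : G.IsPathIn B (y :: (z :: r ++ s)) :=
    ⟨List.isChain_cons.2 ⟨by simpa using hzy.symm, hrot⟩,
      hperm'.nodup_iff.2 (List.nodup_cons.2 ⟨hyx, h.isPathIn.nodup⟩),
      fun x hx => by
        rcases List.mem_cons.1 (hperm'.mem_iff.1 hx) with rfl | hx
        exacts [hy, h.isPathIn.mem x hx]⟩
  have := h.length_le _ hlonger
  rw [hperm'.length_eq] at this
  simp at this

theorem isChain_append_cons_reverse {p q : List V} {x : V} (h : (p ++ x :: q).IsChain G.Adj)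
    (hx : ∀ b ∈ q.getLast?, G.Adj x b) : (p ++ x :: q.reverse).IsChain G.Adj := by
  rw [List.append_cons, List.isChain_append] at h ⊢
  refine ⟨h.1, List.isChain_reverse.2 (h.2.1.imp fun _ _ hab => hab.symm), fun a ha b hb => ?_⟩
  rw [List.getLast?_concat, Option.mem_some_iff] at ha
  rw [List.head?_reverse] at hb
  exact ha ▸ hx b hb

theorem IsLongestPathIn.mem_of_adj_of_crossing {p q : List V} {x y a b : V}
    (h : G.IsLongestPathIn B (p ++ x :: y :: q)) (ha : a ∈ (p ++ x :: y :: q).head?)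
    (hb : b ∈ (y :: q).getLast?) (hay : G.Adj a y) (hbx : G.Adj b x) {z w : V}
    (hz : z ∈ p ++ x :: y :: q) (hw : w ∈ B) (hzw : G.Adj z w) : w ∈ p ++ x :: y :: q := by
  refine h.mem_of_adj_of_cycle (((List.reverse_perm _).cons x).append_left p)
    (isChain_append_cons_reverse h.isPathIn.isChain fun c hc => ?_) (fun u hu v hv => ?_) hz hw hzw
  · exact Option.mem_unique hb hc ▸ hbx.symm
  · simp only [List.head?_append, List.head?_cons, Option.mem_def] at ha hv
    simp only [List.reverse_cons, ← List.cons_append, ← List.append_assoc,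
      List.getLast?_concat, Option.mem_some_iff] at hu
    rw [← hu, ← Option.some_inj.1 (ha.symm.trans hv)]
    exact hay.symm

end PathIn

theorem degreeIn_add_degreeIn_lt_length [DecidableRel G.Adj] {B : Finset V} {xs : List V}
    {a b : V} (ha : xs.head? = some a) (hb : xs.getLast? = some b)
    (hNa : ∀ y ∈ B, G.Adj a y → y ∈ xs) (hNb : ∀ y ∈ B, G.Adj b y → y ∈ xs)
    (hno : ∀ p x y q, xs = p ++ x :: y :: q → G.Adj a y → ¬G.Adj b x) :
    G.degreeIn B a + G.degreeIn B b < xs.length := by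
  classical
  set l := xs.length - 1
  have hl : xs.length = l + 1 := by
    have := List.length_pos_iff.2 (show xs ≠ [] by rintro rfl; simp at ha)
    omega
  set f : ℕ → V := fun i => xs.getD i a
  have hf : ∀ i (hi : i < xs.length), f i = xs[i] := fun i hi => List.getD_eq_getElem _ _ hi
  have hf0 : f 0 = a := by simp [f, List.getD_eq_getElem?_getD, ← List.head?_eq_getElem?, ha]
  have hfl : f l = b := by
    simp [f, List.getD_eq_getElem?_getD, l, ← List.getLast?_eq_getElem?, hb]
  set Ia := {i ∈ range l | G.Adj a (f (i + 1))}
  set Ib := {i ∈ range l | G.Adj b (f i)}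
  have hdisj : Disjoint Ia Ib := by
    refine Finset.disjoint_left.2 fun i hia hib => ?_
    simp only [Ia, Ib, mem_filter, mem_range] at hia hib
    refine hno (xs.take i) (f i) (f (i + 1)) (xs.drop (i + 2)) ?_ hia.2 hib.2
    rw [hf i (by omega), hf (i + 1) (by omega), ← List.drop_eq_getElem_cons,
      ← List.drop_eq_getElem_cons, List.take_append_drop]
  have hA : {y ∈ B | G.Adj a y} ⊆ Ia.image fun i => f (i + 1) := by
    intro y hy
    rw [mem_filter] at hy
    obtain ⟨j, hj, rfl⟩ := List.getElem_of_mem (hNa y hy.1 hy.2)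
    rw [← hf _ hj] at hy ⊢
    have hj0 : j ≠ 0 := by
      rintro rfl
      exact G.irrefl (hf0 ▸ hy.2)
    obtain ⟨i, rfl⟩ : ∃ i, j = i + 1 := ⟨j - 1, by omega⟩
    exact mem_image.2 ⟨i, mem_filter.2 ⟨mem_range.2 (by omega), hy.2⟩, rfl⟩
  have hB : {y ∈ B | G.Adj b y} ⊆ Ib.image f := by
    intro y hy
    rw [mem_filter] at hy
    obtain ⟨j, hj, rfl⟩ := List.getElem_of_mem (hNb y hy.1 hy.2)
    rw [← hf _ hj] at hy ⊢
    have hjl : j ≠ l := by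
      rintro rfl
      exact G.irrefl (hfl ▸ hy.2)
    exact mem_image.2 ⟨j, mem_filter.2 ⟨mem_range.2 (by omega), hy.2⟩, rfl⟩
  calc G.degreeIn B a + G.degreeIn B b ≤ #Ia + #Ib :=
        add_le_add ((card_le_card hA).trans card_image_le) ((card_le_card hB).trans card_image_le)
    _ = #(Ia ∪ Ib) := (card_union_of_disjoint hdisj).symm
    _ ≤ #(range l) := card_le_card (union_subset (filter_subset _ _) (filter_subset _ _))
    _ < xs.length := by rw [card_range]; omega

theorem IsDenseCore.exists_chain_nodup [DecidableEq V] [DecidableRel G.Adj] {c : ℕ}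
    {B : Finset V} (hB : G.IsDenseCore c B) :
    ∃ xs : List V, xs.IsChain G.Adj ∧ xs.Nodup ∧ c + 2 ≤ xs.length := by
  have hBne : B.Nonempty := card_pos.1 (by have := hB.add_two_le_card; omega)
  obtain ⟨xs, hxs, hne⟩ := exists_isLongestPathIn (G := G) hBne
  obtain ⟨a, ha⟩ := Option.ne_none_iff_exists'.1 (mt List.head?_eq_none_iff.1 hne)
  obtain ⟨b, hb⟩ := Option.ne_none_iff_exists'.1 (mt List.getLast?_eq_none_iff.1 hne)
  refine ⟨xs, hxs.isPathIn.isChain, hxs.isPathIn.nodup, ?_⟩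
  by_cases hcross : ∃ p x y q, xs = p ++ x :: y :: q ∧ G.Adj a y ∧ G.Adj b x
  · obtain ⟨p, x, y, q, rfl, hay, hbx⟩ := hcross
    rw [List.getLast?_append_of_ne_nil _ (List.cons_ne_nil _ _)] at hb
    have hcover : (p ++ x :: y :: q).toFinset = B := by
      by_contra hne
      obtain ⟨z, hz, w, hw, hzw⟩ := hB.exists_adj_sdiff _
        (fun x hx => hxs.isPathIn.mem x (List.mem_toFinset.1 hx))
        ⟨a, List.mem_toFinset.2 (List.mem_of_head? ha)⟩ hne
      rw [mem_sdiff, List.mem_toFinset] at hw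
      exact hw.2 (hxs.mem_of_adj_of_crossing ha hb hay hbx (List.mem_toFinset.1 hz) hw.1 hzw)
    rw [← List.toFinset_card_of_nodup hxs.isPathIn.nodup, hcover]
    exact hB.add_two_le_card
  · push Not at hcross
    have := G.degreeIn_add_degreeIn_lt_length ha hb (fun y hy => hxs.mem_of_adj_head ha hy)
      (fun y hy => hxs.mem_of_adj_getLast hb hy) hcross
    have := hB.lt_two_mul_degreeIn a (hxs.isPathIn.mem a (List.mem_of_head? ha))
    have := hB.lt_two_mul_degreeIn b (hxs.isPathIn.mem b (List.mem_of_getLast? hb))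
    omega

theorem exists_isPath_lt_length_of_mul_card_lt [Fintype V] [DecidableRel G.Adj] (c : ℕ)
    (h : c * Fintype.card V < 2 * #G.edgeFinset) :
    ∃ (u v : V) (p : G.Walk u v), p.IsPath ∧ c < p.length := by
  classical
  have hsum : G.sumDegreesIn univ = 2 * #G.edgeFinset := by
    rw [← sum_degrees_eq_twice_card_edges]
    exact sum_congr rfl fun v _ => by rw [degreeIn, degree, neighborFinset_eq_filter]
  obtain ⟨B, -, hB⟩ := exists_isDenseCore (G := G) c (A := univ) (by rwa [card_univ, hsum])
  obtain ⟨xs, hchain, hnodup, hlen⟩ := hB.exists_chain_nodup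
  have hne : xs ≠ [] := by rintro rfl; simp at hlen
  refine ⟨_, _, Walk.ofSupport xs hne hchain, ?_, ?_⟩
  · rw [Walk.isPath_def, Walk.support_ofSupport]
    exact hnodup
  · rw [Walk.length_ofSupport]
    omega

theorem Walk.IsPath.disjoint_support_take_drop_s4 {G : SimpleGraph V} {u v : V} {p : G.Walk u v}
    (hp : p.IsPath) {a b m n : ℕ} (hab : a + m < b) (hb : b ≤ p.length) :
    ((p.drop a).take m).support.Disjoint ((p.drop b).take n).support := by
  rw [support_take, support_take, drop_support_eq_support_drop_min,
    drop_support_eq_support_drop_min, min_eq_left (by omega), min_eq_left hb, List.take_drop]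
  refine List.disjoint_of_subset_left ?_ (List.disjoint_of_subset_right
    (List.take_sublist _ _).subset (List.disjoint_take_drop hp.support_nodup le_rfl))
  exact ((List.drop_sublist _ _).trans (List.take_sublist_take_left (by omega))).subset

def touching (H : SimpleGraph V) (U : Set V) : SimpleGraph V :=
  fromEdgeSet {e ∈ H.edgeSet | ∃ v ∈ e, v ∈ U}

variable {H : SimpleGraph V} {U : Set V}

theorem touching_adj {x y : V} : (H.touching U).Adj x y ↔ H.Adj x y ∧ (x ∈ U ∨ y ∈ U) := by
  simp only [touching, fromEdgeSet_adj, Set.mem_ofPred_eq, mem_edgeSet, Sym2.mem_iff,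
    exists_eq_or_imp, exists_eq_left]
  exact ⟨fun h => h.1, fun h => ⟨h, h.1.ne⟩⟩

theorem touching_le : H.touching U ≤ H := fun _ _ h => (touching_adj.1 h).1

theorem ncard_edgeSet_touching [Finite V] : (H.touching U).edgeSet.ncard = eW H U + eB H U Uᶜ := by
  have hsplit : (H.touching U).edgeSet = {e ∈ H.edgeSet | ∀ v ∈ e, v ∈ U} ∪
      {e ∈ H.edgeSet | ∃ u ∈ U, ∃ w ∈ Uᶜ, e = s(u, w)} := by
    ext e
    induction e with
    | _ x y =>
      simp only [mem_edgeSet, touching_adj, Set.mem_union, Set.mem_ofPred_eq, Sym2.mem_iff,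
        forall_eq_or_imp, forall_eq, Set.mem_compl_iff, Sym2.eq_iff]
      grind
  have hdisj : Disjoint {e ∈ H.edgeSet | ∀ v ∈ e, v ∈ U}
      {e ∈ H.edgeSet | ∃ u ∈ U, ∃ w ∈ Uᶜ, e = s(u, w)} := by
    rw [Set.disjoint_left]
    rintro _ ⟨-, hU⟩ ⟨-, u, -, w, hw, rfl⟩
    exact hw (hU w (Sym2.mem_mk_right u w))
  rw [hsplit, Set.ncard_union_eq hdisj, eW, eB]

end SimpleGraph

open SimpleGraph in
/-- let `Ĥ` be a graph on `n` vertices with vertex partition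
`U ⊔ Uᶜ`, let `k' i ≥ 1` and `κ = ∑ k' i`. If
`e(U) + e(U, W) > (4κ + t - 2)·n/2`, then `Ĥ` contains `t` pairwise
vertex-disjoint paths, the `i`-th on `2 k' i + 1` vertices, with all
endpoints in `U`. -/
theorem stmt4 {V : Type*} [Fintype V] (H : SimpleGraph V) (U : Set V)
    (t : ℕ) (ht : 1 ≤ t) (k' : Fin t → ℕ) (hk' : ∀ i, 1 ≤ k' i)
    (κ : ℕ) (hκ : κ = ∑ i, k' i)
    (h : ((4 * κ + t : ℝ) - 2) * (Fintype.card V) / 2 < (eW H U : ℝ) + eB H U Uᶜ) :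
    ∃ (u v : Fin t → V) (p : ∀ i, H.Walk (u i) (v i)),
      (∀ i, u i ∈ U ∧ v i ∈ U ∧ (p i).IsPath ∧ (p i).length = 2 * k' i) ∧
      ∀ i j, i ≠ j → List.Disjoint (p i).support (p j).support := by
  classical
  have hκt : t ≤ κ := by simpa [hκ] using sum_le_sum fun i (_ : i ∈ univ) => hk' i
  have hdense : (4 * κ + t - 2) * Fintype.card V < 2 * #(H.touching U).edgeFinset := by
    rw [← Set.ncard_coe_finset, coe_edgeFinset, ncard_edgeSet_touching]
    have : (((4 * κ + t - 2) * Fintype.card V : ℕ) : ℝ) < (2 * (eW H U + eB H U Uᶜ) : ℕ) := by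
      push_cast [Nat.cast_sub (show 2 ≤ 4 * κ + t by omega)]
      linarith
    exact_mod_cast this
  obtain ⟨a, b, P, hP, hlen⟩ := (H.touching U).exists_isPath_lt_length_of_mul_card_lt _ hdense
  have hS : ∀ j < P.length, P.getVert j ∈ U ∨ P.getVert (j + 1) ∈ U := fun j hj =>
    (touching_adj.1 (P.adj_getVert_succ hj)).2
  obtain ⟨s, hs, hord⟩ := exists_separated_pairs hS k' hk' (p := 0) (by omega)
  refine ⟨fun i => P.getVert (s i), fun i => (P.drop (s i)).getVert (2 * k' i),
    fun i => ((P.drop (s i)).take (2 * k' i)).mapLe touching_le,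
    fun i => ⟨(hs i).2.2.1, ?_, ?_, ?_⟩, fun i j hij => ?_⟩
  · simpa only [Walk.drop_getVert] using (hs i).2.2.2
  · exact (Walk.isPath_mapLe _).2 ((hP.drop _).take _)
  · simp only [Walk.length_mapLe, Walk.take_length, Walk.drop_length]
    have := hs i
    omega
  · rw [Walk.support_mapLe_eq_support, Walk.support_mapLe_eq_support]
    rcases hij.lt_or_gt with hij | hij
    · exact hP.disjoint_support_take_drop_s4 (hord i j hij) (by have := hs j; omega)
    · exact (hP.disjoint_support_take_drop_s4 (hord j i hij) (by have := hs i; omega)).symm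
end

section
/- Let G be a graph on n vertices with no subgraph isomorphic to C_{2k_1,...,2k_t} (all k_i ≥ 2, κ = Σ(k_i-1)). Then for every vertex u of G, 2·e(N_1(u)) + e(N_1(u), N_2(u)) ≤ (2κ + t/2 - 1)·(d(u) + n - 1), where N_1(u) and N_2(u) are the sets of vertices at distance 1 and 2 from u respectively. -/
/-!
Put `A = N₁(u)` and `B = N₂(u)`. Joining `u` to the ends of `t` vertex-disjoint paths in
`G[A ∪ B]` with both ends in `A` and `2kᵢ - 2` edges gives `C_{2k₁,…,2k_t}`, so there are no such
paths, and it suffices to show `2e(A) + e(A,B) ≤ (2κ + t/2 - 1)(2|A| + |B|)` for every disjoint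
pair `A, B` without them. Induct on `|A| + |B|`: a vertex `a ∈ A` with `2d_A(a) + d_B(a)`, or
`b ∈ B` with `2d_A(b)`, at most `4κ + t - 2` can be deleted, and if the graph `H` of edges of
`G[A ∪ B]` meeting `A` is disconnected the two sides are handled separately. Otherwise `H` is
connected with minimum degree at least `(4κ + t - 1)/2`, so the Dirac–Pósa longest path argument
yields a path on `4κ + t` vertices. No two consecutive vertices of it lie in `B`, and such a path
can be cut into the `t` forbidden `A`-paths.
-/

/-- The intersecting even cycle `C_{2k₁,…,2k_t}`. -/
def interCycles (t : ℕ) (k : Fin t → ℕ) :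
    SimpleGraph (Option (Σ i : Fin t, Fin (2 * k i - 1))) :=
  SimpleGraph.fromRel (fun x y =>
    match x, y with
    | none, some ⟨i, j⟩ => (j : ℕ) = 0 ∨ (j : ℕ) = 2 * k i - 2
    | some ⟨i, j⟩, some ⟨i', j'⟩ => i = i' ∧ (j : ℕ) + 1 = (j' : ℕ)
    | _, _ => False)

/-- `H` occurs as a subgraph of `G`. -/
def ContainsCopy {α β : Type*} (H : SimpleGraph α) (G : SimpleGraph β) : Prop :=
  ∃ f : α ↪ β, ∀ a b, H.Adj a b → G.Adj (f a) (f b)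

open Finset

theorem exists_pair_at_distance_s10 {f : ℕ → Prop} {m D x : ℕ} (hgap : ∀ l < m, f l ∨ f (l + 1))
    (hD : 0 < D) (hDe : Even D) (hx : x + 2 * D ≤ m) :
    ∃ v, x ≤ v ∧ v + D ≤ x + 2 * D ∧ f v ∧ f (v + D) := by
  obtain ⟨y, hxy, hyx, hy⟩ : ∃ y, x ≤ y ∧ y ≤ x + 1 ∧ f y :=
    (hgap x (by omega)).elim (fun h => ⟨x, le_rfl, by omega, h⟩)
      fun h => ⟨x + 1, by omega, le_rfl, h⟩
  by_contra! hno
  -- Otherwise `f` holds at `y, y + 2, …, y + D`, and `(y, y + D)` is a pair after all.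
  have key : ∀ j, 2 * j ≤ D → f (y + 2 * j) := by
    intro j
    induction j with
    | zero => exact fun _ => hy
    | succ j ih =>
      intro hj
      have h₁ := ih (by omega)
      have h₂ : f (y + 2 * j + D + 1) :=
        (hgap _ (by omega)).resolve_left (hno _ (by omega) (by omega) h₁)
      have h₃ : ¬f (y + 2 * j + 1) := fun h =>
        hno _ (by omega) (by omega) h (by rwa [show y + 2 * j + 1 + D = y + 2 * j + D + 1 by omega])
      rw [show y + 2 * (j + 1) = y + 2 * j + 1 + 1 by omega]
      exact (hgap _ (by omega)).resolve_left h₃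
  obtain ⟨c, rfl⟩ := hDe
  exact hno y hxy (by omega) hy (by simpa [two_mul] using key c (by omega))

theorem exists_pairs_at_distances {t : ℕ} {f : ℕ → Prop} {m : ℕ} (D : Fin t → ℕ)
    (hgap : ∀ l < m, f l ∨ f (l + 1)) (hD : ∀ i, 0 < D i) (hDe : ∀ i, Even (D i))
    (hm : ∑ i, (2 * D i + 1) ≤ m + 1) :
    ∃ v : Fin t → ℕ, (∀ i, f (v i) ∧ f (v i + D i) ∧ v i + D i ≤ m) ∧
      ∀ i j, i < j → v i + D i < v j := by
  set S : Fin t → ℕ := fun i => ∑ j ∈ Iio i, (2 * D j + 1)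
  have hS : ∀ i, S i + (2 * D i + 1) = ∑ j ∈ Iic i, (2 * D j + 1) := fun i => by
    rw [← Iio_insert, sum_insert (by simp), add_comm]
  have hSm : ∀ i, S i + 2 * D i ≤ m := fun i => by
    have := hS i
    have := sum_le_sum_of_subset (f := fun j => 2 * D j + 1) (subset_univ (Iic i))
    omega
  choose v hv using fun i => exists_pair_at_distance_s10 hgap (hD i) (hDe i) (hSm i)
  refine ⟨v, fun i => ⟨(hv i).2.2.1, (hv i).2.2.2, by have := (hv i).2.1; have := hSm i; omega⟩,
    fun i j hij => ?_⟩
  have := hS i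
  have : ∑ j ∈ Iic i, (2 * D j + 1) ≤ S j :=
    sum_le_sum_of_subset fun x hx => mem_Iio.2 ((mem_Iic.1 hx).trans_lt hij)
  have := (hv i).2.1
  have := (hv j).1
  omega

theorem Set.MapsTo.snoc {V : Type*} {q : ℕ → V} {m : ℕ} {S : Set V}
    (hq : Set.MapsTo q (Set.Iic m) S) {z : V} (hz : z ∈ S) :
    Set.MapsTo (fun l => if l ≤ m then q l else z) (Set.Iic (m + 1)) S := fun l _ => by
  by_cases h : l ≤ m
  · simpa only [if_pos h] using hq h
  · simpa only [if_neg h] using hz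

namespace SimpleGraph

variable {V : Type*}

-- A path with `m` edges, given by its vertex sequence `q 0, q 1, …, q m`.
structure IsPathSeq (H : SimpleGraph V) (q : ℕ → V) (m : ℕ) : Prop where
  adj : ∀ l < m, H.Adj (q l) (q (l + 1))
  injOn : Set.InjOn q (Set.Iic m)

def degIn (G : SimpleGraph V) [DecidableRel G.Adj] (S : Finset V) (x : V) : ℕ :=
  #{y ∈ S | G.Adj x y}

section LongPath

variable {H : SimpleGraph V} {q : ℕ → V} {m : ℕ}

theorem exists_crossing [DecidableEq V] [DecidableRel H.Adj] {W : Finset V}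
    (hstart : ∀ z, H.Adj (q 0) z → z ∈ q '' Set.Iic m)
    (hend : ∀ z, H.Adj (q m) z → z ∈ q '' Set.Iic m)
    (hdeg : m + 1 ≤ H.degIn W (q 0) + H.degIn W (q m)) :
    ∃ i < m, H.Adj (q 0) (q (i + 1)) ∧ H.Adj (q i) (q m) := by
  have h₀ : H.degIn W (q 0) ≤ #{l ∈ range m | H.Adj (q 0) (q (l + 1))} := by
    refine (card_le_card fun y hy => ?_).trans (card_image_le (f := fun l => q (l + 1)))
    obtain ⟨l, hl, rfl⟩ := hstart y (mem_filter.1 hy).2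
    obtain ⟨l, rfl⟩ := Nat.exists_eq_add_one_of_ne_zero fun h =>
      H.loopless.irrefl _ (h ▸ (mem_filter.1 hy).2)
    exact mem_image.2 ⟨l, mem_filter.2 ⟨mem_range.2 (by simp at hl; omega),
      (mem_filter.1 hy).2⟩, rfl⟩
  have hₘ : H.degIn W (q m) ≤ #{l ∈ range m | H.Adj (q l) (q m)} := by
    refine (card_le_card fun y hy => ?_).trans (card_image_le (f := q))
    obtain ⟨l, hl, rfl⟩ := hend y (mem_filter.1 hy).2
    have hlm : l ≠ m := fun h => H.loopless.irrefl _ (h ▸ (mem_filter.1 hy).2)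
    exact mem_image.2 ⟨l, mem_filter.2 ⟨mem_range.2 (by simp at hl; omega),
      (mem_filter.1 hy).2.symm⟩, rfl⟩
  obtain ⟨i, hi⟩ := inter_nonempty_of_card_lt_card_add_card (filter_subset _ _)
    (filter_subset _ _) (by rw [card_range]; exact hdeg.trans (add_le_add h₀ hₘ))
  simp only [mem_inter, mem_filter, mem_range] at hi
  exact ⟨i, hi.1.1, hi.1.2, hi.2.2⟩

namespace IsPathSeq

theorem mono {G : SimpleGraph V} (hq : H.IsPathSeq q m) (hHG : H ≤ G) : G.IsPathSeq q m :=
  ⟨fun l hl => hHG (hq.adj l hl), hq.injOn⟩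

theorem reverse (hq : H.IsPathSeq q m) : H.IsPathSeq (fun l => q (m - l)) m where
  adj l hl := by
    have h := hq.adj (m - (l + 1)) (by omega)
    rw [show m - (l + 1) + 1 = m - l by omega] at h
    exact h.symm
  injOn l hl l' hl' h := by
    simp only [Set.mem_Iic] at hl hl'
    have := hq.injOn (Set.mem_Iic.2 (Nat.sub_le m l)) (Set.mem_Iic.2 (Nat.sub_le m l')) h
    omega

theorem shift (hq : H.IsPathSeq q m) {v D : ℕ} (hvD : v + D ≤ m) :
    H.IsPathSeq (fun l => q (v + l)) D where
  adj l hl := hq.adj (v + l) (by omega)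
  injOn l hl l' hl' h := by
    simp only [Set.mem_Iic] at hl hl'
    have := hq.injOn (Set.mem_Iic.2 (by omega)) (Set.mem_Iic.2 (by omega)) h
    omega

theorem snoc (hq : H.IsPathSeq q m) {z : V} (hz : H.Adj (q m) z) (hzq : z ∉ q '' Set.Iic m) :
    H.IsPathSeq (fun l => if l ≤ m then q l else z) (m + 1) where
  adj l hl := by
    rcases Nat.lt_or_ge l m with h | h
    · simpa [h.le, Nat.succ_le_of_lt h] using hq.adj l h
    · obtain rfl : l = m := by omega
      simpa using hz
  injOn l hl l' hl' h := by
    simp only [Set.mem_Iic] at hl hl'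
    dsimp only at h
    split_ifs at h with h₁ h₂ h₂
    · exact hq.injOn h₁ h₂ h
    · exact absurd ⟨l, h₁, h⟩ hzq
    · exact absurd ⟨l', h₂, h.symm⟩ hzq
    · omega

theorem rotate (hq : H.IsPathSeq q m) (hc : H.Adj (q m) (q 0)) {s : ℕ} (hs : s ≤ m) :
    H.IsPathSeq (fun l => if s + l ≤ m then q (s + l) else q (s + l - (m + 1))) m where
  adj l hl := by
    rcases lt_trichotomy (s + l) m with h | h | h
    · rw [if_pos h.le, if_pos (by omega)]
      exact hq.adj _ h
    · rw [if_pos h.le, if_neg (by omega), h, show s + (l + 1) - (m + 1) = 0 by omega]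
      exact hc
    · rw [if_neg (by omega), if_neg (by omega),
        show s + (l + 1) - (m + 1) = s + l - (m + 1) + 1 by omega]
      exact hq.adj _ (by omega)
  injOn l hl l' hl' h := by
    simp only [Set.mem_Iic] at hl hl'
    dsimp only at h
    split_ifs at h <;>
      have := hq.injOn (Set.mem_Iic.2 (by omega)) (Set.mem_Iic.2 (by omega)) h <;> omega

theorem exists_cycle (hq : H.IsPathSeq q m) {i : ℕ} (hi : i < m)
    (h₀ : H.Adj (q 0) (q (i + 1))) (hₘ : H.Adj (q i) (q m)) :
    ∃ c, H.IsPathSeq c m ∧ H.Adj (c m) (c 0) ∧ Set.MapsTo c (Set.Iic m) (q '' Set.Iic m) := by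
  -- The cycle `q 0, …, q i, q m, q (m - 1), …, q (i + 1)`.
  set σ : ℕ → ℕ := fun l => if l ≤ i then l else m + i + 1 - l
  have hσ : Set.MapsTo σ (Set.Iic m) (Set.Iic m) := fun l hl => by
    simp only [σ, Set.mem_Iic] at hl ⊢
    split_ifs <;> omega
  have hσinj : Set.InjOn σ (Set.Iic m) := fun l hl l' hl' h => by
    simp only [σ, Set.mem_Iic] at hl hl' h
    split_ifs at h <;> omega
  refine ⟨q ∘ σ, ⟨fun l hl => ?_, hq.injOn.comp hσinj hσ⟩, ?_, fun l hl => ⟨σ l, hσ hl, rfl⟩⟩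
  · simp only [Function.comp, σ]
    rcases lt_trichotomy l i with h | rfl | h
    · rw [if_pos h.le, if_pos (show l + 1 ≤ i from h)]
      exact hq.adj l hl
    · rw [if_pos le_rfl, if_neg (by omega), show m + l + 1 - (l + 1) = m by omega]
      exact hₘ
    · rw [if_neg (by omega), if_neg (by omega), show m + i + 1 - l = m + i - l + 1 by omega,
        show m + i + 1 - (l + 1) = m + i - l by omega]
      exact (hq.adj _ (by omega)).symm
  · simp only [Function.comp, σ, if_neg (show ¬m ≤ i by omega), if_pos (Nat.zero_le i),
      show m + i + 1 - m = i + 1 by omega]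
    exact h₀.symm

theorem exists_succ_of_cycle (hq : H.IsPathSeq q m) (hc : H.Adj (q m) (q 0)) {s : ℕ} (hs : s ≤ m)
    {z : V} (hz : H.Adj (q s) z) (hzq : z ∉ q '' Set.Iic m) :
    ∃ q', H.IsPathSeq q' (m + 1) ∧ Set.MapsTo q' (Set.Iic (m + 1)) (insert z (q '' Set.Iic m)) := by
  set r := fun l => if s + l ≤ m then q (s + l) else q (s + l - (m + 1))
  have hr : Set.MapsTo r (Set.Iic m) (q '' Set.Iic m) := fun l hl => by
    simp only [r, Set.mem_Iic] at hl ⊢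
    split_ifs <;> exact ⟨_, Set.mem_Iic.2 (by omega), rfl⟩
  have hrev : Set.MapsTo (fun l => r (m - l)) (Set.Iic m) (q '' Set.Iic m) :=
    fun l _ => hr (Set.mem_Iic.2 (Nat.sub_le m l))
  exact ⟨_, (hq.rotate hc hs).reverse.snoc (by simpa [r, hs] using hz)
      fun h => hzq (hrev.image_subset h),
    (hrev.mono_right (Set.subset_insert z _)).snoc (Set.mem_insert z _)⟩

theorem exists_succ [DecidableEq V] [DecidableRel H.Adj] {W : Finset V}
    (hW : ∀ x y, H.Adj x y → x ∈ W) (hconn : ∀ x ∈ W, ∀ y ∈ W, H.Reachable x y)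
    (hq : H.IsPathSeq q m) (hqW : Set.MapsTo q (Set.Iic m) W)
    (hdeg : ∀ x ∈ W, m + 1 ≤ 2 * H.degIn W x) (hmW : m + 1 < #W) :
    ∃ q', H.IsPathSeq q' (m + 1) ∧ Set.MapsTo q' (Set.Iic (m + 1)) W := by
  by_cases hend : ∃ z, H.Adj (q m) z ∧ z ∉ q '' Set.Iic m
  · obtain ⟨z, hz, hzq⟩ := hend
    exact ⟨_, hq.snoc hz hzq, hqW.snoc (hW z _ hz.symm)⟩
  by_cases hstart : ∃ z, H.Adj (q 0) z ∧ z ∉ q '' Set.Iic m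
  · obtain ⟨z, hz, hzq⟩ := hstart
    have hrev : Set.MapsTo (fun l => q (m - l)) (Set.Iic m) (q '' Set.Iic m) :=
      fun l _ => ⟨m - l, Set.mem_Iic.2 (Nat.sub_le m l), rfl⟩
    exact ⟨_, hq.reverse.snoc (by simpa using hz) fun h => hzq (hrev.image_subset h),
      (hrev.mono_right (hqW.image_subset)).snoc (hW z _ hz.symm)⟩
  push Not at hend hstart
  -- Both ends have all their neighbours on the path, so the degree bound closes it into a cycle,
  -- and the cycle can be entered along an edge from the rest of `W`.
  have h0 : 0 ∈ Set.Iic m := Set.mem_Iic.2 (Nat.zero_le m)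
  obtain ⟨i, hi, h₀, hₘ⟩ := exists_crossing (W := W) hstart hend (by
    have := hdeg _ (hqW h0); have := hdeg _ (hqW (Set.mem_Iic.2 le_rfl)); omega)
  obtain ⟨c, hc, hcm, hcq⟩ := hq.exists_cycle hi h₀ hₘ
  have hcW : Set.MapsTo c (Set.Iic m) W := hcq.mono_right (hqW.image_subset)
  obtain ⟨w, hwW, hwc⟩ : ∃ w ∈ W, w ∉ c '' Set.Iic m := by
    obtain ⟨w, hw, hwc⟩ := exists_mem_notMem_of_card_lt_card (s := (Iic m).image c) (t := W)
      ((card_image_le.trans (by simp)).trans_lt hmW)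
    refine ⟨w, hw, ?_⟩
    rintro ⟨l, hl, h⟩
    exact hwc (mem_image.2 ⟨l, by simpa using hl, h⟩)
  obtain ⟨p⟩ := hconn _ (hcW h0) w hwW
  obtain ⟨d, -, ⟨s, hs, hsd⟩, hd⟩ := p.exists_boundary_dart (c '' Set.Iic m) ⟨0, h0, rfl⟩ hwc
  obtain ⟨q', hq', hq'W⟩ := hc.exists_succ_of_cycle hcm hs (hsd ▸ d.adj) hd
  exact ⟨q', hq', hq'W.mono_right (Set.insert_subset (hW _ _ d.adj.symm)
    (hcW.image_subset))⟩

end IsPathSeq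

end LongPath

theorem exists_isPathSeq_of_le_two_mul_degIn [DecidableEq V] {H : SimpleGraph V}
    [DecidableRel H.Adj] {W : Finset V} {M : ℕ}
    (hW : ∀ x y, H.Adj x y → x ∈ W) (hconn : ∀ x ∈ W, ∀ y ∈ W, H.Reachable x y)
    (hdeg : ∀ x ∈ W, M ≤ 2 * H.degIn W x) :
    ∀ m < #W, m ≤ M → ∃ q, H.IsPathSeq q m ∧ Set.MapsTo q (Set.Iic m) W
  | 0, hW0, _ => by
    obtain ⟨x, hx⟩ := card_pos.1 hW0
    exact ⟨fun _ => x, ⟨fun l hl => absurd hl (Nat.not_lt_zero l), fun l hl l' hl' _ => by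
      simp_all⟩, fun _ _ => hx⟩
  | m + 1, hmW, hmM => by
    obtain ⟨q, hq, hqW⟩ :=
      exists_isPathSeq_of_le_two_mul_degIn hW hconn hdeg m (by omega) (by omega)
    exact hq.exists_succ hW hconn hqW (fun x hx => hmM.trans (hdeg x hx)) hmW

section DegIn

variable {G : SimpleGraph V} [DecidableRel G.Adj] {S T : Finset V}

theorem degIn_filter {P : V → Prop} [DecidablePred P] {x : V}
    (hP : ∀ y ∈ S, G.Adj x y → P y) : G.degIn (S.filter P) x = G.degIn S x := by
  rw [degIn, degIn, filter_filter]
  exact congrArg card (filter_congr fun y hy => and_iff_right_of_imp (hP y hy))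

theorem sum_degIn_eq_card (S T : Finset V) :
    ∑ x ∈ S, G.degIn T x = #{p ∈ S ×ˢ T | G.Adj p.1 p.2} := by
  simp only [degIn, card_filter, sum_product]

theorem sum_degIn_self [Fintype V] (S : Finset V) : ∑ x ∈ S, G.degIn S x = 2 * eW G S := by
  classical
  have h := two_mul_card_edgeFinset (fromEdgeSet {e ∈ G.edgeSet | ∀ v ∈ e, v ∈ (S : Set V)})
  have hdiag : Disjoint {e ∈ G.edgeSet | ∀ v ∈ e, v ∈ (S : Set V)} Sym2.diagSet :=
    Set.disjoint_left.2 fun e he => G.not_isDiag_of_mem_edgeSet he.1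
  rw [← Set.ncard_coe_finset, coe_edgeFinset, edgeSet_fromEdgeSet, hdiag.sdiff_eq_left] at h
  rw [eW, h, sum_degIn_eq_card]
  congr 1
  ext ⟨x, y⟩
  simp only [mem_filter, mem_product, mem_univ, true_and, fromEdgeSet_adj, Set.mem_ofPred_eq,
    mem_edgeSet, Sym2.mem_iff, forall_eq_or_imp, forall_eq, mem_coe]
  exact ⟨fun ⟨⟨hx, hy⟩, h⟩ => ⟨⟨h, hx, hy⟩, h.ne⟩, fun ⟨⟨h, hx, hy⟩, _⟩ => ⟨⟨hx, hy⟩, h⟩⟩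

theorem sum_degIn_of_disjoint (hST : Disjoint S T) : ∑ x ∈ S, G.degIn T x = eB G S T := by
  have hE : {e ∈ G.edgeSet | ∃ u ∈ (S : Set V), ∃ w ∈ (T : Set V), e = s(u, w)} =
      (fun p : V × V => s(p.1, p.2)) '' ↑({p ∈ S ×ˢ T | G.Adj p.1 p.2}) := by
    ext e
    induction e with | h x y => ?_
    simp only [Set.mem_ofPred_eq, mem_edgeSet, mem_coe, Set.mem_image, mem_filter, mem_product,
      Prod.exists]
    constructor
    · rintro ⟨h, u, hu, w, hw, he⟩
      exact ⟨u, w, ⟨⟨hu, hw⟩, by rwa [← mem_edgeSet, ← he, mem_edgeSet]⟩, he.symm⟩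
    · rintro ⟨u, w, ⟨⟨hu, hw⟩, h⟩, he⟩
      exact ⟨by rwa [← mem_edgeSet, ← he, mem_edgeSet], u, hu, w, hw, he.symm⟩
  rw [eB, hE, Set.InjOn.ncard_image, Set.ncard_coe_finset, sum_degIn_eq_card]
  rintro ⟨x, y⟩ hxy ⟨x', y'⟩ hxy' h
  simp only [mem_coe, mem_filter, mem_product] at hxy hxy'
  rcases Sym2.eq_iff.1 h with ⟨rfl, rfl⟩ | ⟨rfl, rfl⟩
  · rfl
  · exact absurd hxy.1.1 (disjoint_right.1 hST hxy'.1.2)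

variable [DecidableEq V]

theorem degIn_union (hST : Disjoint S T) (x : V) :
    G.degIn (S ∪ T) x = G.degIn S x + G.degIn T x := by
  rw [degIn, filter_union, card_union_of_disjoint (disjoint_filter_filter hST), degIn, degIn]

theorem degIn_erase_self (S : Finset V) (x : V) : G.degIn (S.erase x) x = G.degIn S x := by
  rw [degIn, filter_erase, erase_eq_of_notMem fun h => G.loopless.irrefl x (mem_filter.1 h).2,
    degIn]

theorem degIn_le_card_sub_one {x : V} (hx : x ∈ S) : G.degIn S x ≤ #S - 1 := by
  rw [← card_erase_of_mem hx]
  exact card_le_card fun y hy => mem_erase.2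
    ⟨fun h => G.loopless.irrefl x (h ▸ (mem_filter.1 hy).2), (mem_filter.1 hy).1⟩

theorem sum_degIn_insert {a : V} (ha : a ∉ T) :
    ∑ x ∈ S, G.degIn (insert a T) x = ∑ x ∈ S, G.degIn T x + G.degIn S a := by
  have h : ∀ x, G.degIn (insert a T) x = G.degIn T x + if G.Adj x a then 1 else 0 := fun x => by
    rw [degIn, filter_insert]
    split_ifs
    · rw [card_insert_of_notMem fun h => ha (mem_filter.1 h).1, degIn]
    · rfl
  rw [sum_congr rfl fun x _ => h x, sum_add_distrib, sum_boole, Nat.cast_id, degIn]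
  exact congrArg _ (congrArg card (filter_congr fun x _ => G.adj_comm x a))

theorem sum_degIn_union_eq [Fintype V] (hST : Disjoint S T) :
    ∑ x ∈ S, G.degIn (S ∪ T) x = 2 * eW G S + eB G S T := by
  rw [sum_congr rfl fun x _ => degIn_union hST x, sum_add_distrib, sum_degIn_self,
    sum_degIn_of_disjoint hST]

end DegIn

section APaths

variable [DecidableEq V] {G : SimpleGraph V} {A B : Finset V}

def HasDisjointAPaths {ι : Type*} (G : SimpleGraph V) (A B : Finset V) (ℓ : ι → ℕ) : Prop :=
  ∃ p : ι → ℕ → V, (∀ i, G.IsPathSeq (p i) (ℓ i)) ∧ (∀ i, p i 0 ∈ A ∧ p i (ℓ i) ∈ A) ∧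
    (∀ i, Set.MapsTo (p i) (Set.Iic (ℓ i)) ↑(A ∪ B)) ∧
    Pairwise fun i j => Disjoint (p i '' Set.Iic (ℓ i)) (p j '' Set.Iic (ℓ j))

namespace HasDisjointAPaths

variable {ι : Type*} {ℓ : ι → ℕ}

theorem of_isEmpty [IsEmpty ι] : G.HasDisjointAPaths A B ℓ :=
  ⟨fun i => isEmptyElim i, isEmptyElim, isEmptyElim, isEmptyElim, fun i => isEmptyElim i⟩

theorem mono {A' B' : Finset V} (h : G.HasDisjointAPaths A B ℓ) (hA : A ⊆ A') (hB : B ⊆ B') :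
    G.HasDisjointAPaths A' B' ℓ := by
  obtain ⟨p, hp, hends, hmaps, hdisj⟩ := h
  exact ⟨p, hp, fun i => ⟨hA (hends i).1, hA (hends i).2⟩,
    fun i => (hmaps i).mono_right (coe_subset.2 (union_subset_union hA hB)), hdisj⟩

theorem of_isPathSeq {t : ℕ} {ℓ : Fin t → ℕ} {q : ℕ → V} {m : ℕ} (hq : G.IsPathSeq q m)
    (hqAB : Set.MapsTo q (Set.Iic m) ↑(A ∪ B)) (hqA : ∀ l < m, q l ∈ A ∨ q (l + 1) ∈ A)
    (hℓ : ∀ i, 0 < ℓ i) (hℓe : ∀ i, Even (ℓ i)) (hm : ∑ i, (2 * ℓ i + 1) ≤ m + 1) :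
    G.HasDisjointAPaths A B ℓ := by
  obtain ⟨v, hv, hvv⟩ := exists_pairs_at_distances (f := fun l => q l ∈ A) ℓ hqA hℓ hℓe hm
  refine ⟨fun i l => q (v i + l), fun i => hq.shift (hv i).2.2,
    fun i => ⟨(hv i).1, (hv i).2.1⟩, fun i l hl => hqAB ?_, fun i j hij => ?_⟩
  · simp only [Set.mem_Iic] at hl ⊢
    have := (hv i).2.2
    omega
  · refine Set.disjoint_left.2 ?_
    rintro _ ⟨l, hl, rfl⟩ ⟨l', hl', h⟩
    simp only [Set.mem_Iic] at hl hl'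
    have := hq.injOn (Set.mem_Iic.2 (by have := (hv j).2.2; omega))
      (Set.mem_Iic.2 (by have := (hv i).2.2; omega)) h
    rcases hij.lt_or_gt with hij | hij
    · have := hvv i j hij; omega
    · have := hvv j i hij; omega

theorem containsCopy_interCycles {t : ℕ} {k : Fin t → ℕ}
    (h : G.HasDisjointAPaths A B fun i => 2 * k i - 2) {u : V} (hu : ∀ x ∈ A, G.Adj u x)
    (huAB : u ∉ A ∪ B) : ContainsCopy (interCycles t k) G := by
  obtain ⟨p, hp, hends, hmaps, hdisj⟩ := h
  have hj : ∀ i (j : Fin (2 * k i - 1)), (j : ℕ) ∈ Set.Iic (2 * k i - 2) := fun i j => by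
    simp only [Set.mem_Iic]
    omega
  let F : Option (Σ i : Fin t, Fin (2 * k i - 1)) → V := fun
    | none => u
    | some ⟨i, j⟩ => p i j
  have hF : Function.Injective F := by
    rintro (_ | ⟨i, j⟩) (_ | ⟨i', j'⟩) h
    · rfl
    · exact absurd ((show u = p i' j' from h) ▸ hmaps i' (hj i' j')) huAB
    · exact absurd ((show p i j = u from h) ▸ hmaps i (hj i j)) huAB
    · obtain rfl | hii := eq_or_ne i i'
      · obtain rfl := Fin.ext ((hp i).injOn (hj i j) (hj i j') h)
        rfl
      · exact (Set.disjoint_left.1 (hdisj hii) ⟨j, hj i j, rfl⟩ ⟨j', hj i' j', h.symm⟩).elim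
  refine ⟨⟨F, hF⟩, ?_⟩
  have hA : ∀ i, p i 0 ∈ A ∧ p i (2 * k i - 2) ∈ A := hends
  rintro (_ | ⟨i, j⟩) (_ | ⟨i', j'⟩) hadj <;>
    simp only [interCycles, fromRel_adj, ne_eq, or_false, false_or, reduceCtorEq,
      not_false_eq_true, true_and, Option.some.injEq] at hadj
  · simp at hadj
  · show G.Adj u (p i' j')
    rcases hadj with h | h <;> rw [h] <;> simp [hu, hA]
  · show G.Adj (p i j) u
    rcases hadj with h | h <;> rw [h] <;> simp [(hu _ _).symm, hA]
  · show G.Adj (p i j) (p i' j')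
    rcases hadj.2 with ⟨rfl, h⟩ | ⟨rfl, h⟩
    · rw [← h]
      exact (hp _).adj j (by have := j'.isLt; dsimp only; omega)
    · rw [← h]
      exact ((hp _).adj j' (by have := j.isLt; dsimp only; omega)).symm

end HasDisjointAPaths

theorem two_le_sum_of_not_hasDisjointAPaths {t : ℕ} {ℓ : Fin t → ℕ} (hℓ : ∀ i, 0 < ℓ i)
    (hfree : ¬G.HasDisjointAPaths A B ℓ) : 2 ≤ ∑ i, (2 * ℓ i + 1) := by
  obtain ⟨i⟩ : Nonempty (Fin t) := by
    by_contra h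
    have := not_nonempty_iff.1 h
    exact hfree .of_isEmpty
  have := single_le_sum (f := fun i => 2 * ℓ i + 1) (fun _ _ => Nat.zero_le _) (mem_univ i)
  have := hℓ i
  omega

-- Along a path of this graph no two consecutive vertices lie outside `A`.
def linkGraph (G : SimpleGraph V) (A B : Finset V) : SimpleGraph V where
  Adj x y := G.Adj x y ∧ x ∈ A ∪ B ∧ y ∈ A ∪ B ∧ (x ∈ A ∨ y ∈ A)
  symm := ⟨fun _ _ h => ⟨h.1.symm, h.2.2.1, h.2.1, h.2.2.2.symm⟩⟩
  loopless := ⟨fun x h => G.loopless.irrefl x h.1⟩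

instance [DecidableRel G.Adj] : DecidableRel (G.linkGraph A B).Adj := fun _ _ => by
  unfold linkGraph
  infer_instance

theorem linkGraph_le : G.linkGraph A B ≤ G := fun _ _ h => h.1

variable [DecidableRel G.Adj]

theorem degIn_linkGraph_of_mem_left {x : V} (hx : x ∈ A) :
    (G.linkGraph A B).degIn (A ∪ B) x = G.degIn (A ∪ B) x :=
  congrArg card <| filter_congr fun _ hy =>
    ⟨And.left, fun h => ⟨h, mem_union_left _ hx, hy, .inl hx⟩⟩

theorem degIn_linkGraph_of_mem_right (hAB : Disjoint A B) {x : V} (hx : x ∈ B) :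
    (G.linkGraph A B).degIn (A ∪ B) x = G.degIn A x := by
  have hxA : x ∉ A := Finset.disjoint_right.1 hAB hx
  refine congrArg card (ext fun y => ?_)
  simp only [mem_filter, linkGraph, mem_union, hxA, false_or]
  exact ⟨fun ⟨_, h, _, _, hy⟩ => ⟨hy, h⟩, fun ⟨hy, h⟩ => ⟨.inl hy, h, hx, .inl hy, hy⟩⟩

theorem two_mul_sum_degIn_le_of_erase_left {c : ℕ} {a : V} (ha : a ∈ A) (hAB : Disjoint A B)
    (hdeg : 2 * G.degIn A a + G.degIn B a ≤ c)
    (h : 2 * ∑ x ∈ A.erase a, G.degIn (A.erase a ∪ B) x ≤ c * (2 * #(A.erase a) + #B)) :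
    2 * ∑ x ∈ A, G.degIn (A ∪ B) x ≤ c * (2 * #A + #B) := by
  have ha' : a ∉ A.erase a ∪ B := by simp [Finset.disjoint_left.1 hAB ha]
  have hsum : ∑ x ∈ A, G.degIn (A ∪ B) x =
      ∑ x ∈ A.erase a, G.degIn (A.erase a ∪ B) x + (2 * G.degIn A a + G.degIn B a) := by
    rw [← sum_erase_add _ _ ha, ← insert_erase ha, insert_union, erase_insert (notMem_erase a A),
      sum_degIn_insert ha', ← insert_union, insert_erase ha, degIn_erase_self,
      degIn_union hAB]
    ring
  have hcard := card_erase_add_one ha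
  rw [hsum, ← hcard]
  nlinarith

theorem two_mul_sum_degIn_le_of_erase_right {c : ℕ} {b : V} (hb : b ∈ B) (hAB : Disjoint A B)
    (hdeg : 2 * G.degIn A b ≤ c)
    (h : 2 * ∑ x ∈ A, G.degIn (A ∪ B.erase b) x ≤ c * (2 * #A + #(B.erase b))) :
    2 * ∑ x ∈ A, G.degIn (A ∪ B) x ≤ c * (2 * #A + #B) := by
  have hb' : b ∉ A ∪ B.erase b := by simp [Finset.disjoint_right.1 hAB hb]
  rw [← insert_erase hb, union_insert, sum_degIn_insert hb',
    card_insert_of_notMem (notMem_erase b B)]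
  nlinarith

theorem two_mul_sum_degIn_le_of_split {c : ℕ} (P : V → Prop) [DecidablePred P]
    (hP : ∀ x ∈ A, ∀ y ∈ A ∪ B, G.Adj x y → (P x ↔ P y))
    (h₁ : 2 * ∑ x ∈ A.filter P, G.degIn (A.filter P ∪ B.filter P) x ≤
      c * (2 * #(A.filter P) + #(B.filter P)))
    (h₂ : 2 * ∑ x ∈ A.filter (¬P ·), G.degIn (A.filter (¬P ·) ∪ B.filter (¬P ·)) x ≤
      c * (2 * #(A.filter (¬P ·)) + #(B.filter (¬P ·)))) :
    2 * ∑ x ∈ A, G.degIn (A ∪ B) x ≤ c * (2 * #A + #B) := by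
  rw [← filter_union] at h₁ h₂
  rw [sum_congr rfl fun x hx => degIn_filter fun y hy hxy =>
    (hP x (mem_filter.1 hx).1 y hy hxy).1 (mem_filter.1 hx).2] at h₁
  rw [sum_congr rfl fun x hx => degIn_filter fun y hy hxy =>
    mt (hP x (mem_filter.1 hx).1 y hy hxy).2 (mem_filter.1 hx).2] at h₂
  rw [← sum_filter_add_sum_filter_not A P, ← card_filter_add_card_filter_not (s := A) P,
    ← card_filter_add_card_filter_not (s := B) P]
  nlinarith

theorem two_mul_sum_degIn_le_of_card_le {c : ℕ} (hc : #(A ∪ B) ≤ c + 1) :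
    2 * ∑ x ∈ A, G.degIn (A ∪ B) x ≤ c * (2 * #A + #B) := by
  have : ∑ x ∈ A, G.degIn (A ∪ B) x ≤ #A * c := by
    rw [← smul_eq_mul, ← sum_const]
    exact sum_le_sum fun x hx => (degIn_le_card_sub_one (mem_union_left B hx)).trans (by omega)
  nlinarith

theorem hasDisjointAPaths_of_reachable {t m : ℕ} {ℓ : Fin t → ℕ} (hℓ : ∀ i, 0 < ℓ i)
    (hℓe : ∀ i, Even (ℓ i)) (hAB : Disjoint A B)
    (hconn : ∀ x ∈ A ∪ B, ∀ y ∈ A ∪ B, (G.linkGraph A B).Reachable x y)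
    (hdegA : ∀ a ∈ A, m ≤ 2 * G.degIn A a + G.degIn B a) (hdegB : ∀ b ∈ B, m ≤ 2 * G.degIn A b)
    (hmAB : m < #(A ∪ B)) (hm : ∑ i, (2 * ℓ i + 1) ≤ m + 1) : G.HasDisjointAPaths A B ℓ := by
  have hdeg : ∀ x ∈ A ∪ B, m ≤ 2 * (G.linkGraph A B).degIn (A ∪ B) x := fun x hx => by
    rcases mem_union.1 hx with hx | hx
    · rw [degIn_linkGraph_of_mem_left hx, degIn_union hAB]
      have := hdegA x hx
      omega
    · rw [degIn_linkGraph_of_mem_right hAB hx]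
      exact hdegB x hx
  obtain ⟨q, hq, hqAB⟩ :=
    exists_isPathSeq_of_le_two_mul_degIn (H := G.linkGraph A B) (fun _ _ h => h.2.1) hconn hdeg
      m hmAB le_rfl
  exact .of_isPathSeq (hq.mono linkGraph_le) hqAB (fun l hl => (hq.adj l hl).2.2.2) hℓ hℓe hm

theorem card_filter_add_card_filter_lt (hAB : Disjoint A B) {P : V → Prop} [DecidablePred P]
    {z : V} (hz : z ∈ A ∪ B) (hPz : ¬P z) : #(A.filter P) + #(B.filter P) < #A + #B := by
  rw [← card_union_of_disjoint (disjoint_filter_filter hAB), ← filter_union,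
    ← card_union_of_disjoint hAB]
  exact card_lt_card (filter_ssubset.2 ⟨z, hz, hPz⟩)

theorem two_mul_sum_degIn_le {t : ℕ} {ℓ : Fin t → ℕ} (hℓ : ∀ i, 0 < ℓ i) (hℓe : ∀ i, Even (ℓ i))
    (hAB : Disjoint A B) (hfree : ¬G.HasDisjointAPaths A B ℓ) :
    2 * ∑ x ∈ A, G.degIn (A ∪ B) x ≤ (∑ i, (2 * ℓ i + 1) - 2) * (2 * #A + #B) := by
  classical
  have hL := two_le_sum_of_not_hasDisjointAPaths hℓ hfree
  set c := ∑ i, (2 * ℓ i + 1) - 2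
  induction hn : #A + #B using Nat.strong_induction_on generalizing A B with
  | _ n ih =>
  have hIH : ∀ A' ⊆ A, ∀ B' ⊆ B, #A' + #B' < #A + #B →
      2 * ∑ x ∈ A', G.degIn (A' ∪ B') x ≤ c * (2 * #A' + #B') := fun A' hA' B' hB' hlt =>
    ih _ (hn ▸ hlt) (hAB.mono hA' hB') (fun h => hfree (h.mono hA' hB')) rfl
  by_cases hA : ∃ a ∈ A, 2 * G.degIn A a + G.degIn B a ≤ c
  · obtain ⟨a, ha, hdeg⟩ := hA
    exact two_mul_sum_degIn_le_of_erase_left ha hAB hdeg (hIH _ (erase_subset a A) B subset_rfl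
      (by rw [card_erase_of_mem ha]; have := card_pos.2 ⟨a, ha⟩; omega))
  by_cases hB : ∃ b ∈ B, 2 * G.degIn A b ≤ c
  · obtain ⟨b, hb, hdeg⟩ := hB
    exact two_mul_sum_degIn_le_of_erase_right hb hAB hdeg (hIH A subset_rfl _ (erase_subset b B)
      (by rw [card_erase_of_mem hb]; have := card_pos.2 ⟨b, hb⟩; omega))
  push Not at hA hB
  by_cases hc : #(A ∪ B) ≤ c + 1
  · exact two_mul_sum_degIn_le_of_card_le hc
  by_cases hconn : ∀ x ∈ A ∪ B, ∀ y ∈ A ∪ B, (G.linkGraph A B).Reachable x y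
  · exact absurd (hasDisjointAPaths_of_reachable hℓ hℓe hAB hconn hA hB (by omega) (by omega))
      hfree
  push Not at hconn
  obtain ⟨x, hx, y, hy, hxy⟩ := hconn
  have hP : ∀ z ∈ A, ∀ w ∈ A ∪ B, G.Adj z w →
      ((G.linkGraph A B).Reachable x z ↔ (G.linkGraph A B).Reachable x w) :=
    fun z hz w hw hzw =>
      have hl : (G.linkGraph A B).Adj z w := ⟨hzw, mem_union_left B hz, hw, .inl hz⟩
      ⟨fun h => h.trans hl.reachable, fun h => h.trans hl.symm.reachable⟩
  exact two_mul_sum_degIn_le_of_split _ hP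
    (hIH _ (filter_subset _ _) _ (filter_subset _ _) (card_filter_add_card_filter_lt hAB hy hxy))
    (hIH _ (filter_subset _ _) _ (filter_subset _ _)
      (card_filter_add_card_filter_lt hAB hx (not_not.2 (Reachable.refl x))))

theorem two_mul_eW_add_eB_le [Fintype V] {t : ℕ} {ℓ : Fin t → ℕ} (hℓ : ∀ i, 0 < ℓ i)
    (hℓe : ∀ i, Even (ℓ i)) (hAB : Disjoint A B) (hfree : ¬G.HasDisjointAPaths A B ℓ) :
    2 * (eW G A : ℝ) + eB G A B ≤
      ((∑ i, (2 * ℓ i + 1) : ℕ) / 2 - 1 : ℝ) * (2 * #A + #B) := by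
  have h := two_mul_sum_degIn_le hℓ hℓe hAB hfree
  have hL := two_le_sum_of_not_hasDisjointAPaths hℓ hfree
  rw [sum_degIn_union_eq hAB] at h
  generalize ∑ i, (2 * ℓ i + 1) = L at h hL ⊢
  have h' := (Nat.cast_le (α := ℝ)).2 h
  push_cast [Nat.cast_sub hL] at h'
  linarith

end APaths

end SimpleGraph

/-- if `G` on `n` vertices has no copy of `C_{2k₁,…,2k_t}`
(all `k i ≥ 2`, `κ = ∑ (k i - 1)`), then for every vertex `u`,
`2·e(N₁(u)) + e(N₁(u), N₂(u)) ≤ (2κ + t/2 - 1)(d(u) + n - 1)`, where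
`N_i(u)` is the set of vertices at distance exactly `i` from `u`. -/
theorem stmt10 {V : Type*} [Fintype V] (G : SimpleGraph V)
    (t : ℕ) (ht : 1 ≤ t) (k : Fin t → ℕ) (hk : ∀ i, 2 ≤ k i)
    (κ : ℕ) (hκ : κ = ∑ i, (k i - 1))
    (hfree : ¬ ContainsCopy (interCycles t k) G) :
    ∀ u : V,
      2 * (eW G {v | G.dist u v = 1} : ℝ) +
          (eB G {v | G.dist u v = 1} {v | G.dist u v = 2} : ℝ) ≤
        (2 * κ + t / 2 - 1 : ℝ) *
          (({v | G.dist u v = 1}.ncard : ℝ) + (Fintype.card V : ℝ) - 1) := by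
  classical
  intro u
  set A : Finset V := {v | G.dist u v = 1}
  set B : Finset V := {v | G.dist u v = 2}
  have hAB : Disjoint A B := disjoint_filter.2 fun v _ h₁ h₂ => by omega
  have huAB : u ∉ A ∪ B := by simp [A, B]
  have huA : ∀ x ∈ A, G.Adj u x := fun x hx => SimpleGraph.dist_eq_one_iff_adj.1 (mem_filter.1 hx).2
  have hbound := G.two_mul_eW_add_eB_le (fun i => by have := hk i; omega)
    (fun i => ⟨k i - 1, by have := hk i; omega⟩) hAB
    fun h => hfree (h.containsCopy_interCycles huA huAB)
  have hL : ∑ i, (2 * (2 * k i - 2) + 1) = 4 * κ + t := by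
    rw [hκ, mul_sum, sum_congr rfl fun i _ => (by have := hk i; omega :
      2 * (2 * k i - 2) + 1 = 4 * (k i - 1) + 1), sum_add_distrib]
    simp
  have hκt : t ≤ κ := by
    simpa [hκ] using card_nsmul_le_sum univ (fun i => k i - 1) 1 fun i _ => by
      have := hk i; omega
  have hcard : #A + #B + 1 ≤ Fintype.card V := by
    rw [← card_union_of_disjoint hAB, ← card_insert_of_notMem huAB]
    exact card_le_univ _
  have hA : ({v | G.dist u v = 1} : Set V) = A := by ext; simp [A]
  have hB : ({v | G.dist u v = 2} : Set V) = B := by ext; simp [B]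
  rw [hA, hB, Set.ncard_coe_finset]
  rw [hL] at hbound
  have hcard' : (#A + #B + 1 : ℝ) ≤ Fintype.card V := by exact_mod_cast hcard
  have hκt' : (t : ℝ) ≤ κ := by exact_mod_cast hκt
  have ht' : (1 : ℝ) ≤ t := by exact_mod_cast ht
  push_cast at hbound
  nlinarith
end

section
/- Let t ≥ 1 and let C_{4,...,4} denote the friendship-like graph of t four-cycles intersecting in a single vertex. Then the graph K_{t, 2t+1}^p := tK_1 ∨ ((2t-2)K_1 ∪ P_3), obtained from the complete bipartite graph K_{t,2t+1} by adding a path on 3 vertices inside the part of size 2t+1, contains C_{4,...,4} as a subgraph. -/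
/-- `K_{a,b}^p = aK₁ ∨ ((b-3)K₁ ∪ P₃)`: the complete bipartite graph
`K_{a,b}` with a path on the three vertices `0, 1, 2` added inside the part
of size `b`. -/
def Kbp (a b : ℕ) : SimpleGraph (Fin a ⊕ Fin b) :=
  SimpleGraph.fromRel (fun x y =>
    match x, y with
    | Sum.inl _, Sum.inr _ => True
    | Sum.inr i, Sum.inr j =>
        ((i : ℕ) = 0 ∧ (j : ℕ) = 1) ∨ ((i : ℕ) = 1 ∧ (j : ℕ) = 2)
    | _, _ => False)

def gmap (t : ℕ) (ht : 1 ≤ t) :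
    Option (Σ _i : Fin t, Fin (2 * 2 - 1)) → Fin t ⊕ Fin (2 * t + 1) :=
  fun x =>
    match x with
    | none => Sum.inl ⟨0, ht⟩
    | some ⟨i, j⟩ =>
      if (i : ℕ) = 0 then Sum.inr ⟨(j : ℕ), by have := j.isLt; omega⟩
      else if (j : ℕ) = 1 then Sum.inl i
      else Sum.inr ⟨2 * (i : ℕ) + 1 + (j : ℕ) / 2, by
        have := j.isLt; have := i.isLt; omega⟩

lemma kbp_lr {a b : ℕ} (i : Fin a) (j : Fin b) :
    (Kbp a b).Adj (Sum.inl i) (Sum.inr j) := by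
  rw [Kbp, SimpleGraph.fromRel_adj]
  exact ⟨by simp, Or.inl trivial⟩

lemma kbp_rr {a b : ℕ} (i j : Fin b)
    (h : ((i : ℕ) = 0 ∧ (j : ℕ) = 1) ∨ ((i : ℕ) = 1 ∧ (j : ℕ) = 2)) :
    (Kbp a b).Adj (Sum.inr i) (Sum.inr j) := by
  rw [Kbp, SimpleGraph.fromRel_adj]
  refine ⟨?_, Or.inl h⟩
  intro hij
  have : (i : ℕ) = (j : ℕ) := by rw [Sum.inr.injEq] at hij; exact congrArg _ hij
  omega

lemma sigEq {t : ℕ} (i i' : Fin t) (j j' : Fin (2 * 2 - 1))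
    (h1 : (i : ℕ) = (i' : ℕ)) (h2 : (j : ℕ) = (j' : ℕ)) :
    (some ⟨i, j⟩ : Option (Σ _i : Fin t, Fin (2 * 2 - 1))) = some ⟨i', j'⟩ := by
  have hi : i = i' := Fin.ext h1
  have hj : j = j' := Fin.ext h2
  subst hi hj; rfl

/-- for `t ≥ 1`, the graph `K_{t,2t+1}^p` contains
`C_{4,…,4}` (t four-cycles intersecting in one vertex) as a subgraph. -/
theorem stmt11 (t : ℕ) (ht : 1 ≤ t) :
    ∃ f : Option (Σ _i : Fin t, Fin (2 * 2 - 1)) ↪ (Fin t ⊕ Fin (2 * t + 1)),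
      ∀ a b, (interCycles t (fun _ => 2)).Adj a b →
        (Kbp t (2 * t + 1)).Adj (f a) (f b) := by
  refine ⟨⟨gmap t ht, ?_⟩, ?_⟩
  · intro x y hxy
    match x, y with
    | none, none => rfl
    | none, some ⟨i, j⟩ =>
      exfalso
      by_cases h1 : (i : ℕ) = 0 <;> by_cases h3 : (j : ℕ) = 1 <;>
        simp [gmap, h1, h3] at hxy <;>
        (have hxy := congrArg Fin.val hxy; simp at hxy; omega)
    | some ⟨i, j⟩, none =>
      exfalso
      by_cases h1 : (i : ℕ) = 0 <;> by_cases h3 : (j : ℕ) = 1 <;>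
        simp [gmap, h1, h3] at hxy <;>
        (have hxy := congrArg Fin.val hxy; simp at hxy; omega)
    | some ⟨i, j⟩, some ⟨i', j'⟩ =>
      have hj := j.isLt
      have hj' := j'.isLt
      by_cases h1 : (i : ℕ) = 0 <;> by_cases h2 : (i' : ℕ) = 0 <;>
        by_cases h3 : (j : ℕ) = 1 <;> by_cases h4 : (j' : ℕ) = 1 <;>
        simp only [gmap, h1, h2, h3, h4, if_true, if_false, ite_true, ite_false,
          eq_self_iff_true, not_true, not_false_iff, Sum.inl.injEq, Sum.inr.injEq,
          Fin.mk.injEq, reduceCtorEq, reduceIte] at hxy <;>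
        first
          | exact hxy.elim
          | ((try have hxy := congrArg Fin.val hxy)
             exact sigEq _ _ _ _ (by omega) (by omega))
  · intro a b hab
    rw [interCycles, SimpleGraph.fromRel_adj] at hab
    obtain ⟨hne, h⟩ := hab
    match a, b with
    | none, none => exact absurd rfl hne
    | none, some ⟨i, j⟩ =>
      have hj : (j : ℕ) = 0 ∨ (j : ℕ) = 2 := by
        rcases h with h | h
        · exact h
        · exact absurd h (by simp)
      show (Kbp t (2 * t + 1)).Adj (Sum.inl ⟨0, ht⟩) (gmap t ht (some ⟨i, j⟩))
      have h3 : ¬ (j : ℕ) = 1 := by omega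
      by_cases h1 : (i : ℕ) = 0 <;>
        simp only [gmap, h1, h3, if_true, if_false, ite_true, ite_false,
          eq_self_iff_true, reduceIte] <;>
        exact kbp_lr _ _
    | some ⟨i, j⟩, none =>
      have hj : (j : ℕ) = 0 ∨ (j : ℕ) = 2 := by
        rcases h with h | h
        · exact absurd h (by simp)
        · exact h
      refine SimpleGraph.Adj.symm ?_
      show (Kbp t (2 * t + 1)).Adj (Sum.inl ⟨0, ht⟩) (gmap t ht (some ⟨i, j⟩))
      have h3 : ¬ (j : ℕ) = 1 := by omega
      by_cases h1 : (i : ℕ) = 0 <;>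
        simp only [gmap, h1, h3, if_true, if_false, ite_true, ite_false,
          eq_self_iff_true, reduceIte] <;>
        exact kbp_lr _ _
    | some ⟨i, j⟩, some ⟨i', j'⟩ =>
      have hj := j.isLt
      have hj' := j'.isLt
      have key : ∀ (p q : Fin (2 * 2 - 1)), (p : ℕ) + 1 = (q : ℕ) →
          (Kbp t (2 * t + 1)).Adj (gmap t ht (some ⟨i, p⟩)) (gmap t ht (some ⟨i, q⟩)) := by
        intro p q hpq
        have hp := p.isLt
        have hq := q.isLt
        by_cases h1 : (i : ℕ) = 0
        · simp only [gmap, h1, ite_true, eq_self_iff_true, reduceIte]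
          exact kbp_rr _ _ (show ((p : ℕ) = 0 ∧ (q : ℕ) = 1) ∨ ((p : ℕ) = 1 ∧ (q : ℕ) = 2)
            from by omega)
        · by_cases h3 : (p : ℕ) = 1
          · have h4 : ¬ (q : ℕ) = 1 := by omega
            simp only [gmap, h1, h3, h4, if_true, if_false, ite_true, ite_false,
              eq_self_iff_true, reduceIte]
            exact kbp_lr _ _
          · have h4 : (q : ℕ) = 1 := by omega
            simp only [gmap, h1, h3, h4, if_true, if_false, ite_true, ite_false,
              eq_self_iff_true, reduceIte]
            exact (kbp_lr _ _).symm
      rcases h with ⟨hii, hjj⟩ | ⟨hii, hjj⟩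
      · subst hii
        exact key j j' hjj
      · subst hii
        exact (key j' j hjj).symm
end

section
/- Let k_i ≥ 3 for all i, κ = Σ(k_i - 1), and let G = S_{n,κ}^+ be the graph obtained from K_κ ∨ (n-κ)K_1 by adding one edge inside the independent set. Then G contains no subgraph isomorphic to C_{2k_1,...,2k_t}. Moreover, any minor of S_{n,κ}^+ is isomorphic to a subgraph of S_{n,κ}^+, so S_{n,κ}^+ is C_{2k_1,...,2k_t}-minor-free. -/
/-- `H` is a minor of `G`: there is a family of nonempty, pairwise disjoint,
connected branch sets in `G` indexed by the vertices of `H`, with an edge of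
`G` between the branch sets of any two adjacent vertices of `H`. -/
def IsMinorOf {α β : Type*} (H : SimpleGraph α) (G : SimpleGraph β) : Prop :=
  ∃ B : α → Set β,
    (∀ a, (B a).Nonempty) ∧
    (∀ a, (G.induce (B a)).Connected) ∧
    (Pairwise fun a a' => Disjoint (B a) (B a')) ∧
    ∀ a a', H.Adj a a' → ∃ x ∈ B a, ∃ y ∈ B a', G.Adj x y

/-- `S_{n,κ}⁺`: the join `K_κ ∨ (n-κ)K₁` together with one extra edge (between
the vertices `κ` and `κ+1`) inside the independent set. -/
def Splus (n κ : ℕ) : SimpleGraph (Fin n) :=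
  SimpleGraph.fromRel (fun a b =>
    (a : ℕ) < κ ∨ (b : ℕ) < κ ∨ ((a : ℕ) = κ ∧ (b : ℕ) = κ + 1))

open Finset

lemma finRotate_finRotate_ne {n : ℕ} (hn : 2 ≤ n) (z : Fin (n + 1)) :
    finRotate (n + 1) (finRotate (n + 1) z) ≠ z := by
  rw [finRotate_apply, finRotate_apply, add_assoc, ne_eq, add_eq_left, Fin.ext_iff]
  simp only [Fin.val_add, Fin.val_one', Fin.val_zero, Nat.add_mod_mod, Nat.mod_add_mod]
  rw [Nat.mod_eq_of_lt (by omega)]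
  omega

lemma two_mul_card_mem_le_of_cycle {V ι : Type*} [Fintype ι] [DecidableEq ι]
    {G : SimpleGraph V} {s : Set V} [DecidablePred (· ∈ s)]
    (hs : {e ∈ G.edgeSet | ∀ v ∈ e, v ∈ s}.Subsingleton) (c : ι ↪ V) (σ : Equiv.Perm ι)
    (hσ : ∀ z, σ (σ z) ≠ z) (hc : ∀ z, G.Adj (c z) (c (σ z))) :
    2 * #{z | c z ∈ s} ≤ Fintype.card ι + 1 := by
  set S : Finset ι := {z | c z ∈ s}
  -- An element of `S ∩ σ S` is the head of a cycle edge inside `s`. There is at most one such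
  -- edge, and since `σ ∘ σ` has no fixed point it is not traversed in both directions.
  have hinter : #(S ∩ S.map σ.toEmbedding) ≤ 1 := by
    refine card_le_one.2 fun a ha b hb => ?_
    simp only [S, mem_inter, mem_map_equiv, mem_filter_univ] at ha hb
    have hedge : ∀ z, c z ∈ s → c (σ z) ∈ s →
        s(c z, c (σ z)) ∈ {e ∈ G.edgeSet | ∀ v ∈ e, v ∈ s} := fun z hz hσz =>
      ⟨hc z, by simp [hz, hσz]⟩
    have := hs (hedge _ ha.2 (by simpa using ha.1)) (hedge _ hb.2 (by simpa using hb.1))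
    simp only [Equiv.apply_symm_apply, Sym2.eq, Sym2.rel_iff', Prod.mk.injEq,
      Prod.swap_prod_mk, c.injective.eq_iff] at this
    rcases this with ⟨-, h⟩ | ⟨h₁, h₂⟩
    · exact h
    · subst h₂
      exact (hσ ((σ.symm) (σ.symm b)) (by simpa using h₁.symm)).elim
  have hunion : #(S ∪ S.map σ.toEmbedding) ≤ Fintype.card ι := card_le_univ _
  have := card_inter_add_card_union S (S.map σ.toEmbedding)
  rw [card_map] at this
  omega

lemma eq_of_mem_of_induce_connected {V : Type*} {G : SimpleGraph V} {s A : Set V}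
    (hs : {e ∈ G.edgeSet | ∀ v ∈ e, v ∈ s}.Subsingleton) (hA : (G.induce A).Connected)
    (hAs : A ⊆ s) {x y z : V} (hx : x ∈ A) (hy : y ∈ s) (hyA : y ∉ A) (hxy : G.Adj x y)
    (hz : z ∈ A) : z = x := by
  by_contra hzx
  have : Nontrivial A := ⟨⟨z, hz⟩, ⟨x, hx⟩, fun h => hzx (congrArg Subtype.val h)⟩
  obtain ⟨⟨w, hw⟩, hzw⟩ := hA.preconnected.exists_adj_of_nontrivial ⟨z, hz⟩
  have := @hs s(z, w) ⟨hzw, by simp [hAs hz, hAs hw]⟩ s(x, y) ⟨hxy, by simp [hAs hx, hy]⟩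
  rw [Sym2.eq_iff] at this
  rcases this with ⟨h, -⟩ | ⟨rfl, -⟩
  · exact hzx h
  · exact hyA hz

theorem containsCopy_of_isMinorOf {α V : Type*} {H : SimpleGraph α} {G : SimpleGraph V}
    {s : Set V} (hs : {e ∈ G.edgeSet | ∀ v ∈ e, v ∈ s}.Subsingleton)
    (hadj : ∀ u ∉ s, ∀ v, u ≠ v → G.Adj u v) (hm : IsMinorOf H G) : ContainsCopy H G := by
  obtain ⟨B, hne, hconn, hdisj, hedge⟩ := hm
  have hrep (a : α) : ∃ x ∈ B a, x ∉ s ∨ B a ⊆ s := by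
    by_cases h : B a ⊆ s
    · exact (hne a).imp fun x hx => ⟨hx, Or.inr h⟩
    · obtain ⟨x, hx, hxs⟩ := Set.not_subset.1 h
      exact ⟨x, hx, Or.inl hxs⟩
  choose r hrB hrs using hrep
  have hr : Function.Injective r := fun a a' h => by
    by_contra hne
    exact Set.disjoint_left.1 (hdisj hne) (hrB a) (h ▸ hrB a')
  refine ⟨⟨r, hr⟩, fun a a' haa' => show G.Adj (r a) (r a') from ?_⟩
  have hne' : r a ≠ r a' := hr.ne haa'.ne
  rcases hrs a with ha | ha
  · exact hadj _ ha _ hne'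
  rcases hrs a' with ha' | ha'
  · exact (hadj _ ha' _ hne'.symm).symm
  obtain ⟨x, hx, y, hy, hxy⟩ := hedge a a' haa'
  have hyA : y ∉ B a := Set.disjoint_right.1 (hdisj haa'.ne) hy
  have hxA' : x ∉ B a' := Set.disjoint_left.1 (hdisj haa'.ne) hx
  rw [eq_of_mem_of_induce_connected hs (hconn a) ha hx (ha' hy) hyA hxy (hrB a),
    eq_of_mem_of_induce_connected hs (hconn a') ha' hy (ha hx) hxA' hxy.symm (hrB a')]
  exact hxy

lemma interCycles_adj_none_some {t : ℕ} {k : Fin t → ℕ} {i : Fin t} {j : Fin (2 * k i - 1)}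
    (h : (j : ℕ) = 0 ∨ (j : ℕ) = 2 * k i - 2) :
    (interCycles t k).Adj none (some ⟨i, j⟩) := by
  rw [interCycles, SimpleGraph.fromRel_adj]
  exact ⟨by simp, Or.inl h⟩

lemma interCycles_adj_some_some {t : ℕ} {k : Fin t → ℕ} {i : Fin t}
    {j j' : Fin (2 * k i - 1)} (h : (j : ℕ) + 1 = j') :
    (interCycles t k).Adj (some ⟨i, j⟩) (some ⟨i, j'⟩) := by
  rw [interCycles, SimpleGraph.fromRel_adj]
  refine ⟨fun he => ?_, Or.inl ⟨rfl, h⟩⟩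
  simp only [Option.some.injEq, Sigma.mk.injEq, heq_eq_eq, true_and] at he
  omega

/-- The `i`-th cycle of `interCycles t k`, listed from the centre; `finRotate` steps along it. -/
def cycleEmbedding (t : ℕ) (k : Fin t → ℕ) (i : Fin t) :
    Fin (2 * k i - 1 + 1) ↪ Option (Σ i : Fin t, Fin (2 * k i - 1)) :=
  (finSuccEquiv _).toEmbedding.trans <| Function.Embedding.optionMap <|
    Function.Embedding.sigmaMk (β := fun i => Fin (2 * k i - 1)) i

lemma interCycles_adj_cycleEmbedding {t : ℕ} {k : Fin t → ℕ} {i : Fin t} (hk : 1 ≤ k i)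
    (j : Fin (2 * k i - 1 + 1)) :
    (interCycles t k).Adj (cycleEmbedding t k i j) (cycleEmbedding t k i (finRotate _ j)) := by
  have hm : 0 < 2 * k i - 1 := by omega
  induction j using Fin.cases with
  | zero =>
    rw [show (0 : Fin (2 * k i - 1 + 1)) = ⟨0, by omega⟩ from rfl, finRotate_of_lt hm]
    exact interCycles_adj_none_some (j := ⟨0, hm⟩) (Or.inl rfl)
  | succ j =>
    by_cases hj : (j : ℕ) + 1 < 2 * k i - 1
    · rw [show j.succ = ⟨j + 1, by omega⟩ from rfl, finRotate_of_lt hj]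
      exact interCycles_adj_some_some (j' := ⟨j + 1, hj⟩) rfl
    · have hlast : finRotate _ j.succ = 0 := by
        rw [show j.succ = Fin.last _ from Fin.ext (by simp; omega), finRotate_last]
      rw [hlast]
      exact (interCycles_adj_none_some (j := j) (Or.inr (by omega))).symm

lemma splus_adj_iff {n κ : ℕ} {u v : Fin n} :
    (Splus n κ).Adj u v ↔ u ≠ v ∧ ((u : ℕ) < κ ∨ (v : ℕ) < κ ∨
      ((u : ℕ) = κ ∧ (v : ℕ) = κ + 1) ∨ ((v : ℕ) = κ ∧ (u : ℕ) = κ + 1)) := by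
  rw [Splus, SimpleGraph.fromRel_adj]
  tauto

lemma splus_adj_of_val_lt {n κ : ℕ} {u v : Fin n} (hu : (u : ℕ) < κ) (huv : u ≠ v) :
    (Splus n κ).Adj u v :=
  splus_adj_iff.2 ⟨huv, Or.inl hu⟩

lemma splus_edgeSet_inter_subsingleton (n κ : ℕ) :
    {e ∈ (Splus n κ).edgeSet | ∀ v ∈ e, v ∈ {v : Fin n | κ ≤ (v : ℕ)}}.Subsingleton := by
  rintro ⟨u, v⟩ ⟨huv, hu⟩ ⟨u', v'⟩ ⟨huv', hu'⟩
  simp only [Sym2.mem_iff, Set.mem_ofPred_eq, forall_eq_or_imp, forall_eq] at hu hu'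
  rw [SimpleGraph.mem_edgeSet, splus_adj_iff] at huv huv'
  simp only [Sym2.eq, Sym2.rel_iff', Prod.mk.injEq, Prod.swap_prod_mk, Fin.ext_iff]
  omega

lemma le_card_filter_cycleEmbedding {t : ℕ} {k : Fin t → ℕ} {i : Fin t} (hk : 2 ≤ k i)
    {n κ : ℕ} (f : Option (Σ i : Fin t, Fin (2 * k i - 1)) ↪ Fin n)
    (hf : ∀ a b, (interCycles t k).Adj a b → (Splus n κ).Adj (f a) (f b)) :
    k i ≤ #{j | (f (cycleEmbedding t k i j) : ℕ) < κ} := by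
  have hcycle := two_mul_card_mem_le_of_cycle (splus_edgeSet_inter_subsingleton n κ)
    ((cycleEmbedding t k i).trans f) (finRotate _) (finRotate_finRotate_ne (by omega))
    fun j => hf _ _ (interCycles_adj_cycleEmbedding (by omega) j)
  have hsplit := card_filter_add_card_filter_not (s := univ)
    fun j => (f (cycleEmbedding t k i j) : ℕ) < κ
  simp only [Fintype.card_fin, Function.Embedding.trans_apply, Set.mem_ofPred_eq,
    card_univ, not_lt] at hcycle hsplit
  omega

theorem not_containsCopy_interCycles_splus {t : ℕ} (ht : 1 ≤ t) {k : Fin t → ℕ}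
    (hk : ∀ i, 2 ≤ k i) {κ : ℕ} (hκ : κ = ∑ i, (k i - 1)) (n : ℕ) :
    ¬ ContainsCopy (interCycles t k) (Splus n κ) := by
  rintro ⟨f, hf⟩
  let hub : Option (Σ i : Fin t, Fin (2 * k i - 1)) → ℕ :=
    fun x => if (f x : ℕ) < κ then 1 else 0
  have hcycle (i : Fin t) : k i ≤ hub none + ∑ j, hub (some ⟨i, j⟩) := by
    have := le_card_filter_cycleEmbedding (hk i) f hf
    rwa [card_filter, Fin.sum_univ_succ] at this
  have htotal : hub none + ∑ i, ∑ j, hub (some ⟨i, j⟩) ≤ κ := calc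
    _ = #{x | (f x : ℕ) < κ} := by rw [card_filter, Fintype.sum_option, Fintype.sum_sigma]
    _ ≤ #{v : Fin n | (v : ℕ) < κ} :=
      card_le_card_of_injOn f (fun x hx => by simpa using hx) f.injective.injOn
    _ ≤ κ := Fin.card_filter_val_lt.trans_le (min_le_right _ _)
  have hnone : hub none ≤ 1 := by simp only [hub]; split <;> omega
  have hsum : ∑ i, (k i - hub none) ≤ ∑ i, ∑ j, hub (some ⟨i, j⟩) :=
    sum_le_sum fun i _ => by have := hcycle i; omega
  obtain h | h : hub none = 0 ∨ hub none = 1 := by omega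
  · have : ∑ i, (k i - 1) < ∑ i, (k i - hub none) :=
      sum_lt_sum (fun i _ => by omega) ⟨⟨0, ht⟩, mem_univ _, by have := hk ⟨0, ht⟩; omega⟩
    omega
  · rw [h] at hsum
    omega

theorem stmt13_general (t : ℕ) (ht : 1 ≤ t) (k : Fin t → ℕ) (hk : ∀ i, 3 ≤ k i)
    (κ : ℕ) (hκ : κ = ∑ i, (k i - 1)) (n : ℕ) :
    ¬ ContainsCopy (interCycles t k) (Splus n κ) ∧
    (∀ (α : Type) (H : SimpleGraph α),
      IsMinorOf H (Splus n κ) → ContainsCopy H (Splus n κ)) ∧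
    ¬ IsMinorOf (interCycles t k) (Splus n κ) := by
  have hnoCopy : ¬ ContainsCopy (interCycles t k) (Splus n κ) :=
    not_containsCopy_interCycles_splus ht (fun i => by have := hk i; omega) hκ n
  have hminor (α : Type) (H : SimpleGraph α) :
      IsMinorOf H (Splus n κ) → ContainsCopy H (Splus n κ) :=
    containsCopy_of_isMinorOf (splus_edgeSet_inter_subsingleton n κ)
      fun _ hu _ => splus_adj_of_val_lt (not_le.1 hu)
  exact ⟨hnoCopy, hminor, fun hm => hnoCopy (hminor _ _ hm)⟩

/-- for `k i ≥ 3` and `κ = ∑ (k i - 1)`, the graph `S_{n,κ}⁺`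
contains no copy of `C_{2k₁,…,2k_t}`; moreover every minor of `S_{n,κ}⁺` is
isomorphic to a subgraph of it, so `S_{n,κ}⁺` is `C_{2k₁,…,2k_t}`-minor-free. -/
theorem stmt13 (t : ℕ) (ht : 1 ≤ t) (k : Fin t → ℕ) (hk : ∀ i, 3 ≤ k i)
    (κ : ℕ) (hκ : κ = ∑ i, (k i - 1)) (n : ℕ) (hn : κ + 2 ≤ n) :
    ¬ ContainsCopy (interCycles t k) (Splus n κ) ∧
    (∀ (α : Type) (H : SimpleGraph α),
      IsMinorOf H (Splus n κ) → ContainsCopy H (Splus n κ)) ∧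
    ¬ IsMinorOf (interCycles t k) (Splus n κ) :=
  stmt13_general t ht k hk κ hκ n
end
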